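/- arXiv:1506.02852 — 6 statements merged into one kernel-verified Lean document; each statement's English description precedes it below -/
import Mathlib

section
/- Restricted TV denoising reduces to isotonic regression: for an ordered partition 𝒜 = (A_1,...,A_m), min_{w ∈ 𝒲^𝒜} f(w) − uᵀw + (1/2)‖w‖² equals min over v_1 ≥ ... ≥ v_m of Σ_{i=1}^m ( v_i [F(B_i) − F(B_{i−1}) − u(A_i)] + (1/2)|A_i| v_i² ). -/
open Finset

/-- A set function on subsets of `Fin n` is submodular. -/
def Submodular {n : ℕ} (F : Finset (Fin n) → ℝ) : Prop :=
  ∀ A B : Finset (Fin n), F (A ∪ B) + F (A ∩ B) ≤ F A + F B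

/-- The Lovász extension of a set function, via a permutation sorting `w` decreasingly. -/
noncomputable def lovasz {n : ℕ} (F : Finset (Fin n) → ℝ) (w : Fin n → ℝ) : ℝ :=
  let σ := Tuple.sort (fun i => -w i)
  ∑ k : Fin n, w (σ k) *
    (F ((Finset.Iic k).image σ) - F ((Finset.Iio k).image σ))

/-- The base polytope of a set function. -/
def basePolytope {n : ℕ} (F : Finset (Fin n) → ℝ) : Set (Fin n → ℝ) :=
  {s | (∑ i, s i) = F Finset.univ ∧
    ∀ A : Finset (Fin n), (∑ i ∈ A, s i) ≤ F A}

/-- `B i = A 0 ∪ ... ∪ A i` : prefix union of an ordered partition. -/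
def prefixUnion {n m : ℕ} (A : Fin m → Finset (Fin n)) (i : Fin m) : Finset (Fin n) :=
  (Finset.Iic i).biUnion A

/-- `B (i-1) = A 0 ∪ ... ∪ A (i-1)` : strict prefix union. -/
def prefixUnion' {n m : ℕ} (A : Fin m → Finset (Fin n)) (i : Fin m) : Finset (Fin n) :=
  (Finset.Iio i).biUnion A

/-- `A` is an ordered partition of the ground set `Fin n` into nonempty parts. -/
def IsOrderedPartition {n m : ℕ} (A : Fin m → Finset (Fin n)) : Prop :=
  (∀ i, (A i).Nonempty) ∧ (∀ i j, i ≠ j → Disjoint (A i) (A j)) ∧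
    Finset.univ.biUnion A = Finset.univ

/-- Vectors compatible with an ordered partition. -/
def compatible {n m : ℕ} (A : Fin m → Finset (Fin n)) : Set (Fin n → ℝ) :=
  {w | ∃ v : Fin m → ℝ, (∀ i j : Fin m, i ≤ j → v j ≤ v i) ∧
    w = fun p => ∑ i, if p ∈ A i then v i else 0}

lemma tv_master {n : ℕ} (F : Finset (Fin n) → ℝ) (w : Fin n → ℝ) (K : ℕ)
    (b : ℕ → ℝ) (C D : ℕ → Finset (Fin n))
    (hb : ∀ k, k + 1 < K → b (k + 1) ≤ b k)
    (himg : (Finset.range K).image b = Finset.image w Finset.univ)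
    (hC : ∀ k, k < K → (k + 1 = K ∨ b k ≠ b (k + 1)) →
        C k = Finset.univ.filter (fun p => b k ≤ w p))
    (hD0 : D 0 = ∅) (hDS : ∀ k, k + 1 ≤ K → D (k + 1) = C k) :
    ∑ k ∈ Finset.range K, b k * (F (C k) - F (D k))
      = ∑ t ∈ Finset.image w Finset.univ,
          t * (F (Finset.univ.filter (fun p => t ≤ w p))
              - F (Finset.univ.filter (fun p => t < w p))) := by
  classical
  -- global antitonicity
  have hmono : ∀ j k, j ≤ k → k < K → b k ≤ b j := by
    intro j k hjk hk
    induction k with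
    | zero => simp_all
    | succ k ih =>
      rcases Nat.lt_or_ge j (k+1) with h | h
      · exact le_trans (hb k hk) (ih (Nat.lt_succ_iff.mp h) (Nat.lt_of_succ_lt hk))
      · have : j = k + 1 := le_antisymm hjk h
        simp [this]
  rw [← himg]
  rw [← Finset.sum_fiberwise_of_maps_to (fun k hk => Finset.mem_image_of_mem b hk)
    (fun k => b k * (F (C k) - F (D k)))]
  refine Finset.sum_congr rfl ?_
  intro t ht
  obtain ⟨k0, hk0, hbk0⟩ := Finset.mem_image.mp ht
  have hfib : ((Finset.range K).filter (fun k => b k = t)).Nonempty :=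
    ⟨k0, Finset.mem_filter.mpr ⟨hk0, hbk0⟩⟩
  set s := (Finset.range K).filter (fun k => b k = t) with hs
  set l := s.min' hfib with hl
  set r := s.max' hfib with hr
  have hmem : ∀ k ∈ s, k < K ∧ b k = t := by
    intro k hk; exact ⟨Finset.mem_range.mp (Finset.mem_filter.mp hk).1,
      (Finset.mem_filter.mp hk).2⟩
  have hlK : l < K := (hmem l (s.min'_mem hfib)).1
  have hrK : r < K := (hmem r (s.max'_mem hfib)).1
  have hbl : b l = t := (hmem l (s.min'_mem hfib)).2
  have hbr : b r = t := (hmem r (s.max'_mem hfib)).2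
  have hlr : l ≤ r := s.min'_le r (s.max'_mem hfib)
  -- the fiber is an interval
  have hsI : s = Finset.Icc l r := by
    apply Finset.ext
    intro k
    constructor
    · intro hk
      exact Finset.mem_Icc.mpr ⟨s.min'_le k hk, s.le_max' k hk⟩
    · intro hk
      obtain ⟨h1, h2⟩ := Finset.mem_Icc.mp hk
      have hkK : k < K := lt_of_le_of_lt h2 hrK
      have e1 : b k ≤ b l := hmono l k h1 hkK
      have e2 : b r ≤ b k := hmono k r h2 hrK
      refine Finset.mem_filter.mpr ⟨Finset.mem_range.mpr hkK, le_antisymm ?_ ?_⟩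
      · rw [← hbl]; exact e1
      · rw [← hbr]; exact e2
  -- identify C r
  have hCr : C r = Finset.univ.filter (fun p => t ≤ w p) := by
    have : C r = Finset.univ.filter (fun p => b r ≤ w p) := by
      apply hC r hrK
      by_cases h : r + 1 = K
      · exact Or.inl h
      · right
        intro hbe
        have : r + 1 ∈ s := Finset.mem_filter.mpr
          ⟨Finset.mem_range.mpr (lt_of_le_of_ne hrK h), by rw [← hbe, hbr]⟩
        exact absurd (s.le_max' _ this) (by omega)
    rw [this, hbr]
  -- identify D l
  have hDl : D l = Finset.univ.filter (fun p => t < w p) := by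
    rcases Nat.eq_zero_or_pos l with h0 | hpos
    · rw [h0, hD0]
      symm
      rw [Finset.filter_eq_empty_iff]
      intro p _
      have : w p ∈ (Finset.range K).image b := by
        rw [himg]; exact Finset.mem_image_of_mem w (Finset.mem_univ p)
      obtain ⟨j, hj, hbj⟩ := Finset.mem_image.mp this
      have : b j ≤ b 0 := hmono 0 j (Nat.zero_le j) (Finset.mem_range.mp hj)
      rw [hbj] at this
      have hb0 : b 0 = t := by rw [← h0, hbl]
      rw [hb0] at this
      exact not_lt.mpr this
    · set l' := l - 1 with hl'def
      have hls : l = l' + 1 := by omega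
      rw [hls] at hbl hlK ⊢
      have hl'K : l' < K := Nat.lt_of_succ_lt hlK
      have hl'ns : l' ∉ s := fun h => absurd (s.min'_le l' h) (by omega)
      have hbl' : b l' ≠ t := fun h =>
        hl'ns (Finset.mem_filter.mpr ⟨Finset.mem_range.mpr hl'K, h⟩)
      have hblt : t < b l' := by
        have : b (l' + 1) ≤ b l' := hb l' hlK
        rw [hbl] at this
        exact lt_of_le_of_ne this (fun h => hbl' h.symm)
      have : D (l' + 1) = C l' := hDS l' (le_of_lt hlK)
      rw [this, hC l' hl'K (Or.inr (by rw [hbl]; exact hbl'))]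
      apply Finset.ext
      intro p
      simp only [Finset.mem_filter, Finset.mem_univ, true_and]
      constructor
      · intro h; exact lt_of_lt_of_le hblt h
      · intro h
        have : w p ∈ (Finset.range K).image b := by
          rw [himg]; exact Finset.mem_image_of_mem w (Finset.mem_univ p)
        obtain ⟨j, hj, hbj⟩ := Finset.mem_image.mp this
        have hjK : j < K := Finset.mem_range.mp hj
        have hjl : j ≤ l' := by
          by_contra hc
          have : l' + 1 ≤ j := by omega
          have := hmono (l' + 1) j this hjK
          rw [hbl, hbj] at this
          exact absurd h (not_lt.mpr this)
        have := hmono j l' hjl hl'K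
        rw [hbj] at this
        exact this
  -- now compute the fiber sum by telescoping
  calc ∑ k ∈ s, b k * (F (C k) - F (D k))
      = ∑ k ∈ s, t * (F (C k) - F (D k)) := by
        refine Finset.sum_congr rfl ?_
        intro k hk
        rw [(hmem k hk).2]
    _ = t * ∑ k ∈ s, (F (C k) - F (D k)) := by rw [Finset.mul_sum]
    _ = t * (F (C r) - F (D l)) := by
        congr 1
        have : ∀ k ∈ s, F (C k) - F (D k) = F (D (k+1)) - F (D k) := by
          intro k hk
          have hkK := (hmem k hk).1
          rw [hDS k hkK]
        rw [Finset.sum_congr rfl this, hsI]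
        have : Finset.Icc l r = Finset.Ico l (r + 1) := by
          rw [Finset.Ico_add_one_right_eq_Icc]
        rw [this, Finset.sum_Ico_eq_sum_range]
        have h1 : r + 1 - l = (r - l) + 1 := by omega
        rw [h1]
        have := Finset.sum_range_sub (fun j => F (D (l + j))) (r - l + 1)
        calc ∑ j ∈ Finset.range (r - l + 1), (F (D (l + j + 1)) - F (D (l + j)))
            = ∑ j ∈ Finset.range (r - l + 1),
                ((fun j => F (D (l + j))) (j + 1) - (fun j => F (D (l + j))) j) := by
              refine Finset.sum_congr rfl ?_
              intro j _
              rfl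
          _ = F (D (l + (r - l + 1))) - F (D (l + 0)) := this
          _ = F (C r) - F (D l) := by
              have h2 : l + (r - l + 1) = r + 1 := by omega
              rw [h2, hDS r hrK]
              simp
    _ = t * (F (Finset.univ.filter (fun p => t ≤ w p))
            - F (Finset.univ.filter (fun p => t < w p))) := by rw [hCr, hDl]


lemma lovasz_eq_levels {n : ℕ} (F : Finset (Fin n) → ℝ) (w : Fin n → ℝ) :
    lovasz F w
      = ∑ t ∈ Finset.image w Finset.univ,
          t * (F (Finset.univ.filter (fun p => t ≤ w p))
              - F (Finset.univ.filter (fun p => t < w p))) := by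
  classical
  set σ := Tuple.sort (fun i => -w i) with hσ
  have hmon : Monotone ((fun i => -w i) ∘ σ) := Tuple.monotone_sort _
  have hanti : ∀ j j' : Fin n, j ≤ j' → w (σ j') ≤ w (σ j) := by
    intro j j' h
    have := hmon h
    simp only [Function.comp_apply] at this
    linarith
  set b : ℕ → ℝ := fun k => if h : k < n then w (σ ⟨k, h⟩) else 0 with hbdef
  set C : ℕ → Finset (Fin n) :=
    fun k => (Finset.univ.filter (fun j : Fin n => (j : ℕ) ≤ k)).image σ with hCdef
  set D : ℕ → Finset (Fin n) :=
    fun k => (Finset.univ.filter (fun j : Fin n => (j : ℕ) < k)).image σ with hDdef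
  have step1 : lovasz F w = ∑ k ∈ Finset.range n, b k * (F (C k) - F (D k)) := by
    rw [lovasz]
    rw [← Fin.sum_univ_eq_sum_range (fun k => b k * (F (C k) - F (D k))) n]
    refine Finset.sum_congr rfl ?_
    intro i _
    have hb : b (i : ℕ) = w (σ i) := by
      simp only [hbdef, dif_pos i.isLt]
    have hc : C (i : ℕ) = (Finset.Iic i).image σ := by
      simp only [hCdef]
      congr 1
      ext j
      simp only [Finset.mem_filter, Finset.mem_univ, true_and, Finset.mem_Iic, Fin.le_def]
    have hd : D (i : ℕ) = (Finset.Iio i).image σ := by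
      simp only [hDdef]
      congr 1
      ext j
      simp only [Finset.mem_filter, Finset.mem_univ, true_and, Finset.mem_Iio, Fin.lt_def]
    rw [hb, hc, hd]
  rw [step1]
  apply tv_master
  · intro k hk
    have h1 : k < n := Nat.lt_of_succ_lt hk
    simp only [hbdef, dif_pos hk, dif_pos h1]
    exact hanti ⟨k, h1⟩ ⟨k + 1, hk⟩ (by simp [Fin.le_def])
  · ext t
    simp only [Finset.mem_image, Finset.mem_range, Finset.mem_univ, true_and]
    constructor
    · rintro ⟨k, hk, rfl⟩
      exact ⟨σ ⟨k, hk⟩, by simp [hbdef, dif_pos hk]⟩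
    · rintro ⟨p, rfl⟩
      refine ⟨(σ.symm p : ℕ), (σ.symm p).isLt, ?_⟩
      simp [hbdef, dif_pos (σ.symm p).isLt]
  · intro k hk hdis
    simp only [hbdef, dif_pos hk]
    ext p
    simp only [hCdef, Finset.mem_image, Finset.mem_filter, Finset.mem_univ, true_and]
    constructor
    · rintro ⟨j, hj, rfl⟩
      exact hanti j ⟨k, hk⟩ (by simpa [Fin.le_def] using hj)
    · intro hp
      refine ⟨σ.symm p, ?_, by simp⟩
      by_contra hc
      push_neg at hc
      have hk1 : k + 1 < n := lt_of_le_of_lt hc (σ.symm p).isLt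
      have hne : b k ≠ b (k + 1) := by
        rcases hdis with h | h
        · omega
        · exact h
      simp only [hbdef, dif_pos hk, dif_pos hk1] at hne
      have h1 : w (σ (σ.symm p)) ≤ w (σ ⟨k + 1, hk1⟩) :=
        hanti ⟨k + 1, hk1⟩ (σ.symm p) (by simpa [Fin.le_def] using hc)
      have h2 : w (σ ⟨k + 1, hk1⟩) ≤ w (σ ⟨k, hk⟩) :=
        hanti ⟨k, hk⟩ ⟨k + 1, hk1⟩ (by simp [Fin.le_def])
      rw [Equiv.apply_symm_apply] at h1
      have : w (σ ⟨k + 1, hk1⟩) < w (σ ⟨k, hk⟩) := lt_of_le_of_ne h2 (fun h => hne h.symm)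
      linarith
  · simp [hDdef]
  · intro k _
    simp only [hDdef, hCdef]
    congr 1
    ext j
    simp [Nat.lt_succ_iff]


lemma part_sum_eq_levels {n m : ℕ} (F : Finset (Fin n) → ℝ)
    (A : Fin m → Finset (Fin n)) (hA : IsOrderedPartition A)
    (v : Fin m → ℝ) (hv : ∀ i j : Fin m, i ≤ j → v j ≤ v i) :
    ∑ i : Fin m, v i * (F (prefixUnion A i) - F (prefixUnion' A i))
      = ∑ t ∈ Finset.image (fun p => ∑ i, if p ∈ A i then v i else 0) Finset.univ,
          t * (F (Finset.univ.filter
                (fun p => t ≤ ∑ i, if p ∈ A i then v i else 0))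
             - F (Finset.univ.filter
                (fun p => t < ∑ i, if p ∈ A i then v i else 0))) := by
  classical
  set w : Fin n → ℝ := fun p => ∑ i, if p ∈ A i then v i else 0 with hwdef
  obtain ⟨hne, hdisj, hcov⟩ := hA
  have hwv : ∀ i : Fin m, ∀ p ∈ A i, w p = v i := by
    intro i p hp
    rw [hwdef]
    simp only
    rw [Finset.sum_eq_single_of_mem i (Finset.mem_univ i)]
    · rw [if_pos hp]
    · intro j _ hji
      rw [if_neg]
      intro hpj
      exact (Finset.disjoint_left.mp (hdisj j i hji)) hpj hp
  have hcover : ∀ p : Fin n, ∃ i, p ∈ A i := by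
    intro p
    have : p ∈ Finset.univ.biUnion A := by rw [hcov]; exact Finset.mem_univ p
    obtain ⟨i, _, hi⟩ := Finset.mem_biUnion.mp this
    exact ⟨i, hi⟩
  set b : ℕ → ℝ := fun k => if h : k < m then v ⟨k, h⟩ else 0 with hbdef
  set C : ℕ → Finset (Fin n) :=
    fun k => (Finset.univ.filter (fun j : Fin m => (j : ℕ) ≤ k)).biUnion A with hCdef
  set D : ℕ → Finset (Fin n) :=
    fun k => (Finset.univ.filter (fun j : Fin m => (j : ℕ) < k)).biUnion A with hDdef
  have step1 : ∑ i : Fin m, v i * (F (prefixUnion A i) - F (prefixUnion' A i))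
      = ∑ k ∈ Finset.range m, b k * (F (C k) - F (D k)) := by
    rw [← Fin.sum_univ_eq_sum_range (fun k => b k * (F (C k) - F (D k))) m]
    refine Finset.sum_congr rfl ?_
    intro i _
    have hb : b (i : ℕ) = v i := by simp only [hbdef, dif_pos i.isLt]
    have hc : C (i : ℕ) = prefixUnion A i := by
      simp only [hCdef, prefixUnion]
      congr 1
      ext j
      simp only [Finset.mem_filter, Finset.mem_univ, true_and, Finset.mem_Iic, Fin.le_def]
    have hd : D (i : ℕ) = prefixUnion' A i := by
      simp only [hDdef, prefixUnion']
      congr 1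
      ext j
      simp only [Finset.mem_filter, Finset.mem_univ, true_and, Finset.mem_Iio, Fin.lt_def]
    rw [hb, hc, hd]
  rw [step1]
  apply tv_master
  · intro k hk
    have h1 : k < m := Nat.lt_of_succ_lt hk
    simp only [hbdef, dif_pos hk, dif_pos h1]
    exact hv ⟨k, h1⟩ ⟨k + 1, hk⟩ (by simp [Fin.le_def])
  · ext t
    simp only [Finset.mem_image, Finset.mem_range, Finset.mem_univ, true_and]
    constructor
    · rintro ⟨k, hk, rfl⟩
      obtain ⟨p, hp⟩ := hne ⟨k, hk⟩
      exact ⟨p, by rw [hwv ⟨k, hk⟩ p hp]; simp [hbdef, dif_pos hk]⟩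
    · rintro ⟨p, rfl⟩
      obtain ⟨i, hi⟩ := hcover p
      exact ⟨(i : ℕ), i.isLt, by rw [hwv i p hi]; simp [hbdef, dif_pos i.isLt]⟩
  · intro k hk hdis
    simp only [hbdef, dif_pos hk]
    ext p
    simp only [hCdef, Finset.mem_biUnion, Finset.mem_filter, Finset.mem_univ, true_and]
    constructor
    · rintro ⟨j, hj, hpj⟩
      rw [hwv j p hpj]
      exact hv j ⟨k, hk⟩ (by simpa [Fin.le_def] using hj)
    · intro hp
      obtain ⟨j, hj⟩ := hcover p
      refine ⟨j, ?_, hj⟩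
      by_contra hc
      push_neg at hc
      have hk1 : k + 1 < m := lt_of_le_of_lt hc j.isLt
      have hne' : v ⟨k, hk⟩ ≠ v ⟨k + 1, hk1⟩ := by
        rcases hdis with h | h
        · omega
        · simpa only [hbdef, dif_pos hk, dif_pos hk1] using h
      have h1 : v j ≤ v ⟨k + 1, hk1⟩ := hv ⟨k + 1, hk1⟩ j (by simpa [Fin.le_def] using hc)
      have h2 : v ⟨k + 1, hk1⟩ < v ⟨k, hk⟩ :=
        lt_of_le_of_ne (hv ⟨k, hk⟩ ⟨k + 1, hk1⟩ (by simp [Fin.le_def])) (fun h => hne' h.symm)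
      rw [hwv j p hj] at hp
      linarith
  · simp [hDdef]
  · intro k _
    simp only [hDdef, hCdef]
    congr 1
    ext j
    simp only [Finset.mem_filter, Nat.lt_succ_iff]

lemma tv_key {n m : ℕ} (F : Finset (Fin n) → ℝ) (u : Fin n → ℝ)
    (A : Fin m → Finset (Fin n)) (hA : IsOrderedPartition A)
    (v : Fin m → ℝ) (hv : ∀ i j : Fin m, i ≤ j → v j ≤ v i) :
    lovasz F (fun p => ∑ i, if p ∈ A i then v i else 0)
      - (∑ p, u p * (∑ i, if p ∈ A i then v i else 0))
      + (1/2) * ∑ p, (∑ i, if p ∈ A i then v i else 0)^2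
      = ∑ i : Fin m,
          (v i * (F (prefixUnion A i) - F (prefixUnion' A i) - ∑ p ∈ A i, u p)
            + (1/2) * (A i).card * (v i)^2) := by
  classical
  set w : Fin n → ℝ := fun p => ∑ i, if p ∈ A i then v i else 0 with hwdef
  obtain ⟨hne, hdisj, hcov⟩ := hA
  have hwv : ∀ i : Fin m, ∀ p ∈ A i, w p = v i := by
    intro i p hp
    rw [hwdef]
    simp only
    rw [Finset.sum_eq_single_of_mem i (Finset.mem_univ i)]
    · rw [if_pos hp]
    · intro j _ hji
      rw [if_neg]
      intro hpj
      exact (Finset.disjoint_left.mp (hdisj j i hji)) hpj hp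
  have hsplit : ∀ g : Fin n → ℝ, ∑ p, g p = ∑ i : Fin m, ∑ p ∈ A i, g p := by
    intro g
    rw [← hcov, Finset.sum_biUnion]
    intro i _ j _ hij
    exact hdisj i j hij
  have hlov : lovasz F w = ∑ i : Fin m, v i * (F (prefixUnion A i) - F (prefixUnion' A i)) := by
    rw [lovasz_eq_levels F w, part_sum_eq_levels F A ⟨hne, hdisj, hcov⟩ v hv]
  have hlin : ∑ p, u p * w p = ∑ i : Fin m, v i * ∑ p ∈ A i, u p := by
    rw [hsplit (fun p => u p * w p)]
    refine Finset.sum_congr rfl ?_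
    intro i _
    rw [Finset.mul_sum]
    refine Finset.sum_congr rfl ?_
    intro p hp
    rw [hwv i p hp]
    ring
  have hquad : ∑ p, (w p)^2 = ∑ i : Fin m, (A i).card * (v i)^2 := by
    rw [hsplit (fun p => (w p)^2)]
    refine Finset.sum_congr rfl ?_
    intro i _
    rw [Finset.sum_congr rfl (fun p hp => by rw [hwv i p hp]),
      Finset.sum_const, nsmul_eq_mul]
  rw [hlov, hlin, hquad, Finset.mul_sum, ← Finset.sum_sub_distrib, ← Finset.sum_add_distrib]
  refine Finset.sum_congr rfl ?_
  intro i _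
  ring

/-- Restricted TV denoising reduces to isotonic regression. -/
theorem restricted_tv_eq_isotonic {n m : ℕ} (F : Finset (Fin n) → ℝ)
    (hF : Submodular F) (hF0 : F ∅ = 0) (u : Fin n → ℝ)
    (A : Fin m → Finset (Fin n)) (hA : IsOrderedPartition A) :
    sInf {x : ℝ | ∃ w ∈ compatible A,
        x = lovasz F w - (∑ i, u i * w i) + (1/2) * ∑ i, (w i)^2}
      = sInf {x : ℝ | ∃ v : Fin m → ℝ, (∀ i j : Fin m, i ≤ j → v j ≤ v i) ∧
          x = ∑ i : Fin m,
            (v i * (F (prefixUnion A i) - F (prefixUnion' A i) - ∑ p ∈ A i, u p)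
              + (1/2) * (A i).card * (v i)^2)} := by
  have hsets : {x : ℝ | ∃ w ∈ compatible A,
        x = lovasz F w - (∑ i, u i * w i) + (1/2) * ∑ i, (w i)^2}
      = {x : ℝ | ∃ v : Fin m → ℝ, (∀ i j : Fin m, i ≤ j → v j ≤ v i) ∧
          x = ∑ i : Fin m,
            (v i * (F (prefixUnion A i) - F (prefixUnion' A i) - ∑ p ∈ A i, u p)
              + (1/2) * (A i).card * (v i)^2)} := by
    ext x
    simp only [Set.mem_setOf_eq, compatible]
    constructor
    · rintro ⟨w, ⟨v, hv, rfl⟩, rfl⟩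
      exact ⟨v, hv, tv_key F u A hA v hv⟩
    · rintro ⟨v, hv, rfl⟩
      exact ⟨fun p => ∑ i, if p ∈ A i then v i else 0, ⟨v, hv, rfl⟩,
        (tv_key F u A hA v hv).symm⟩
  rw [hsets]
end

section
/- Decomposition lower bound: let s ∈ ℝ^n satisfy s(A_i) = F(B_i) − F(B_{i−1}) for all i (where (A_1,...,A_m) is an ordered partition and B_i = A_1 ∪ ... ∪ A_i). Then for every C ⊆ V, writing C_i = C ∩ A_i, one has F(C) − s(C) ≥ Σ_{i=1}^m [F(B_{i−1} ∪ C_i) − F(B_{i−1}) − s(C_i)]. -/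
set_option maxRecDepth 8000

open Finset

/-- Decomposition lower bound: for `s` with `s(A i) = F(B i) - F(B (i-1))` and any
`C ⊆ V`, with `C i = C ∩ A i`,
`F(C) - s(C) ≥ Σ_i [F(B (i-1) ∪ C i) - F(B (i-1)) - s(C i)]`. -/
theorem decomposition_lower_bound {n m : ℕ} (F : Finset (Fin n) → ℝ)
    (hF : Submodular F) (hF0 : F ∅ = 0)
    (A : Fin m → Finset (Fin n)) (hA : IsOrderedPartition A)
    (s : Fin n → ℝ)
    (hs : ∀ i : Fin m,
      (∑ j ∈ A i, s j) = F (prefixUnion A i) - F (prefixUnion' A i)) :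
    ∀ C : Finset (Fin n),
      (∑ i : Fin m,
          (F (prefixUnion' A i ∪ (C ∩ A i)) - F (prefixUnion' A i)
            - ∑ j ∈ C ∩ A i, s j))
        ≤ F C - ∑ j ∈ C, s j := by
  obtain ⟨hne, hdisj, hcover⟩ := hA
  intro C
  -- s sums over the parts add up to s(C)
  have hsum : ∑ i : Fin m, ∑ j ∈ C ∩ A i, s j = ∑ j ∈ C, s j := by
    rw [← Finset.sum_biUnion]
    · congr 1
      ext x
      simp only [Finset.mem_biUnion, Finset.mem_inter, Finset.mem_univ, true_and]
      constructor
      · rintro ⟨i, hx, _⟩; exact hx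
      · intro hx
        have hx2 : x ∈ Finset.univ.biUnion A := by rw [hcover]; exact Finset.mem_univ x
        obtain ⟨i, _, hi⟩ := Finset.mem_biUnion.mp hx2
        exact ⟨i, hx, hi⟩
    · intro i _ j _ hij
      exact Finset.disjoint_left.mpr fun x hx hx' =>
        (Finset.disjoint_left.mp (hdisj i j hij)) (Finset.mem_inter.mp hx).2
          (Finset.mem_inter.mp hx').2
  set g : ℕ → Finset (Fin n) :=
    fun k => C ∩ (Finset.univ.filter (fun i : Fin m => (i : ℕ) < k)).biUnion A with hg
  have hmemg : ∀ k x, x ∈ g k ↔ x ∈ C ∧ ∃ i : Fin m, (i : ℕ) < k ∧ x ∈ A i := by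
    intro k x
    simp [hg, Finset.mem_inter, Finset.mem_biUnion, Finset.mem_filter, and_assoc]
  have hmemB' : ∀ (i : Fin m) x,
      x ∈ prefixUnion' A i ↔ ∃ k : Fin m, (k : ℕ) < (i : ℕ) ∧ x ∈ A k := by
    intro i x
    simp only [prefixUnion', Finset.mem_biUnion, Finset.mem_Iio]
    constructor
    · rintro ⟨k, hk, h⟩; exact ⟨k, Fin.lt_def.mp hk, h⟩
    · rintro ⟨k, hk, h⟩; exact ⟨k, Fin.lt_def.mpr hk, h⟩
  have hstep : ∀ i : Fin m,
      F (prefixUnion' A i ∪ (C ∩ A i)) - F (prefixUnion' A i)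
        ≤ F (g ((i : ℕ) + 1)) - F (g (i : ℕ)) := by
    intro i
    have hunion : prefixUnion' A i ∪ g ((i : ℕ) + 1) = prefixUnion' A i ∪ (C ∩ A i) := by
      ext x
      simp only [Finset.mem_union, hmemg, hmemB', Finset.mem_inter]
      constructor
      · rintro (h | ⟨hC, k, hk, hA'⟩)
        · exact Or.inl h
        · rcases lt_or_eq_of_le (Nat.lt_succ_iff.mp hk) with h' | h'
          · exact Or.inl ⟨k, h', hA'⟩
          · exact Or.inr ⟨hC, by rwa [Fin.ext h'] at hA'⟩
      · rintro (h | ⟨hC, hA'⟩)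
        · exact Or.inl h
        · exact Or.inr ⟨hC, i, Nat.lt_succ_self _, hA'⟩
    have hinter : prefixUnion' A i ∩ g ((i : ℕ) + 1) = g (i : ℕ) := by
      ext x
      simp only [Finset.mem_inter, hmemg, hmemB']
      constructor
      · rintro ⟨⟨k, hk, hA'⟩, hC, -⟩
        exact ⟨hC, k, hk, hA'⟩
      · rintro ⟨hC, k, hk, hA'⟩
        exact ⟨⟨k, hk, hA'⟩, hC, k, Nat.lt_succ_of_lt hk, hA'⟩
    have := hF (prefixUnion' A i) (g ((i : ℕ) + 1))
    rw [hunion, hinter] at this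
    linarith
  have hg0 : g 0 = ∅ := by
    ext x; simp [hmemg]
  have hgm : g m = C := by
    ext x
    rw [hmemg]
    constructor
    · rintro ⟨hC, -⟩; exact hC
    · intro hx
      have hx2 : x ∈ Finset.univ.biUnion A := by rw [hcover]; exact Finset.mem_univ x
      obtain ⟨i, _, hi⟩ := Finset.mem_biUnion.mp hx2
      exact ⟨hx, i, i.isLt, hi⟩
  have htel : ∑ i : Fin m, (F (g ((i : ℕ) + 1)) - F (g (i : ℕ))) = F C := by
    rw [Fin.sum_univ_eq_sum_range (fun k => F (g (k + 1)) - F (g k)) m,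
      Finset.sum_range_sub (fun k => F (g k)), hgm, hg0, hF0, sub_zero]
  have hkey : ∑ i : Fin m,
      (F (prefixUnion' A i ∪ (C ∩ A i)) - F (prefixUnion' A i)) ≤ F C := by
    rw [← htel]
    exact Finset.sum_le_sum fun i _ => hstep i
  calc ∑ i : Fin m,
      (F (prefixUnion' A i ∪ (C ∩ A i)) - F (prefixUnion' A i) - ∑ j ∈ C ∩ A i, s j)
      = (∑ i : Fin m, (F (prefixUnion' A i ∪ (C ∩ A i)) - F (prefixUnion' A i)))
          - ∑ i : Fin m, ∑ j ∈ C ∩ A i, s j := by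
        rw [Finset.sum_sub_distrib]
    _ ≤ F C - ∑ j ∈ C, s j := by rw [hsum]; linarith
end

section
/- Optimality certificate for a basic ordered partition: with s as above (s(A_i) = F(B_i) − F(B_{i−1}) for all i), each subproblem min_{C_i ⊆ A_i} F(B_{i−1} ∪ C_i) − F(B_{i−1}) − s(C_i) has nonpositive optimal value; moreover s ∈ B(F) if and only if all these subproblems have optimal value equal to zero. -/
open Finset

def Dk {n m : ℕ} (A : Fin m → Finset (Fin n)) (k : ℕ) : Finset (Fin n) :=
  (Finset.univ.filter (fun j : Fin m => j.val < k)).biUnion A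

lemma Dk_zero {n m : ℕ} (A : Fin m → Finset (Fin n)) : Dk A 0 = ∅ := by simp [Dk]

lemma Dk_val {n m : ℕ} (A : Fin m → Finset (Fin n)) (i : Fin m) :
    Dk A i.val = prefixUnion' A i := by
  unfold Dk prefixUnion'
  congr 1
  ext j
  simp only [mem_filter, mem_univ, true_and, mem_Iio, Fin.lt_def]

lemma Dk_val_succ {n m : ℕ} (A : Fin m → Finset (Fin n)) (i : Fin m) :
    Dk A (i.val + 1) = prefixUnion A i := by
  unfold Dk prefixUnion
  congr 1
  ext j
  simp only [mem_filter, mem_univ, true_and, mem_Iic, Fin.le_def, Nat.lt_succ_iff]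

lemma Dk_succ {n m : ℕ} (A : Fin m → Finset (Fin n)) (k : ℕ) (hk : k < m) :
    Dk A (k+1) = Dk A k ∪ A ⟨k, hk⟩ := by
  unfold Dk
  ext x
  simp only [mem_biUnion, mem_filter, mem_univ, true_and, mem_union]
  constructor
  · rintro ⟨j, hj, hx⟩
    rcases Nat.lt_succ_iff_lt_or_eq.mp hj with h | h
    · exact Or.inl ⟨j, h, hx⟩
    · exact Or.inr (by rwa [show (⟨k, hk⟩ : Fin m) = j from Fin.ext h.symm])
  · rintro (⟨j, hj, hx⟩ | hx)
    · exact ⟨j, Nat.lt_succ_of_lt hj, hx⟩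
    · exact ⟨⟨k, hk⟩, Nat.lt_succ_self k, hx⟩

lemma Dk_top {n m : ℕ} (A : Fin m → Finset (Fin n))
    (hcov : Finset.univ.biUnion A = Finset.univ) : Dk A m = Finset.univ := by
  unfold Dk
  rw [← hcov]
  congr 1
  ext j
  simp [j.isLt]

lemma disj_prefix {n m : ℕ} (A : Fin m → Finset (Fin n))
    (hd : ∀ i j, i ≠ j → Disjoint (A i) (A j)) (i : Fin m) :
    Disjoint (prefixUnion' A i) (A i) := by
  rw [Finset.disjoint_left]
  intro x hx hx'
  simp only [prefixUnion', mem_biUnion, mem_Iio] at hx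
  obtain ⟨j, hj, hxj⟩ := hx
  exact (Finset.disjoint_left.mp (hd j i (ne_of_lt hj)) hxj) hx'

lemma sum_Dk {n m : ℕ} (F : Finset (Fin n) → ℝ) (hF0 : F ∅ = 0)
    (A : Fin m → Finset (Fin n)) (hd : ∀ i j, i ≠ j → Disjoint (A i) (A j))
    (s : Fin n → ℝ)
    (hs : ∀ i : Fin m,
      (∑ j ∈ A i, s j) = F (prefixUnion A i) - F (prefixUnion' A i)) :
    ∀ k, k ≤ m → (∑ x ∈ Dk A k, s x) = F (Dk A k) := by
  intro k
  induction k with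
  | zero => intro _; simp [Dk_zero, hF0]
  | succ k ih =>
    intro hk
    have hk' : k < m := hk
    set i : Fin m := ⟨k, hk'⟩
    have hDk : Dk A k = prefixUnion' A i := by
      have := Dk_val A i; simpa using this
    have h2 : Dk A (k+1) = prefixUnion A i := by
      have := Dk_val_succ A i; simpa using this
    have hdisj : Disjoint (Dk A k) (A i) := by rw [hDk]; exact disj_prefix A hd i
    calc (∑ x ∈ Dk A (k+1), s x) = (∑ x ∈ Dk A k, s x) + ∑ x ∈ A i, s x := by
            rw [Dk_succ A k hk', Finset.sum_union hdisj]
      _ = F (prefixUnion' A i) + (F (prefixUnion A i) - F (prefixUnion' A i)) := by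
            rw [ih (le_of_lt hk'), hs i, hDk]
      _ = F (Dk A (k+1)) := by rw [h2]; ring

lemma sum_inter_Dk {n m : ℕ} (F : Finset (Fin n) → ℝ)
    (hF : ∀ P Q : Finset (Fin n), F (P ∪ Q) + F (P ∩ Q) ≤ F P + F Q)
    (hF0 : F ∅ = 0)
    (A : Fin m → Finset (Fin n)) (hd : ∀ i j, i ≠ j → Disjoint (A i) (A j))
    (s : Fin n → ℝ) (X : Finset (Fin n))
    (H : ∀ i : Fin m, ∀ C ⊆ A i,
      (∑ j ∈ C, s j) ≤ F (prefixUnion' A i ∪ C) - F (prefixUnion' A i)) :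
    ∀ k, k ≤ m → (∑ x ∈ X ∩ Dk A k, s x) ≤ F (X ∩ Dk A k) := by
  intro k
  induction k with
  | zero => intro _; simp [Dk_zero, hF0]
  | succ k ih =>
    intro hk
    have hk' : k < m := hk
    set i : Fin m := ⟨k, hk'⟩
    have hDk : Dk A k = prefixUnion' A i := Dk_val A i
    set P := prefixUnion' A i with hP
    set C := X ∩ A i with hC
    have hCA : C ⊆ A i := Finset.inter_subset_right
    have hPA : Disjoint P (A i) := disj_prefix A hd i
    have hPC : Disjoint P C := hPA.mono_right hCA
    have hsplit : X ∩ Dk A (k+1) = (X ∩ Dk A k) ∪ C := by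
      rw [Dk_succ A k hk', Finset.inter_union_distrib_left]
    have hsub : X ∩ Dk A k ⊆ P := by rw [hDk]; exact Finset.inter_subset_right
    have hdisj : Disjoint (X ∩ Dk A k) C := by
      exact (hPA.mono_left hsub).mono_right hCA
    have hsm := hF P ((X ∩ Dk A k) ∪ C)
    have hu : P ∪ ((X ∩ Dk A k) ∪ C) = P ∪ C := by
      rw [← Finset.union_assoc, Finset.union_eq_left.mpr hsub]
    have hPC0 : P ∩ C = ∅ := Finset.disjoint_iff_inter_eq_empty.mp hPC
    have hi : P ∩ ((X ∩ Dk A k) ∪ C) = X ∩ Dk A k := by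
      rw [Finset.inter_union_distrib_left,
        Finset.inter_eq_right.mpr hsub, hPC0, Finset.union_empty]
    rw [hu, hi] at hsm
    have hH := H i C hCA
    rw [hsplit, Finset.sum_union hdisj]
    have := ih (le_of_lt hk')
    linarith

theorem basic_partition_optimality_certificate' {n m : ℕ} (F : Finset (Fin n) → ℝ)
    (hF : ∀ P Q : Finset (Fin n), F (P ∪ Q) + F (P ∩ Q) ≤ F P + F Q) (hF0 : F ∅ = 0)
    (A : Fin m → Finset (Fin n))
    (hd : ∀ i j, i ≠ j → Disjoint (A i) (A j))
    (hcov : Finset.univ.biUnion A = Finset.univ)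
    (s : Fin n → ℝ)
    (hs : ∀ i : Fin m,
      (∑ j ∈ A i, s j) = F (prefixUnion A i) - F (prefixUnion' A i)) :
    (∀ i : Fin m,
      ((A i).powerset.inf' ⟨∅, by simp⟩
          (fun C => F (prefixUnion' A i ∪ C) - F (prefixUnion' A i) - ∑ j ∈ C, s j))
        ≤ 0) ∧
    ((((∑ i, s i) = F Finset.univ) ∧ ∀ X : Finset (Fin n), (∑ i ∈ X, s i) ≤ F X) ↔
      ∀ i : Fin m,
        ((A i).powerset.inf' ⟨∅, by simp⟩
            (fun C => F (prefixUnion' A i ∪ C) - F (prefixUnion' A i) - ∑ j ∈ C, s j))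
          = 0) := by
  have hle0 : ∀ i : Fin m,
      ((A i).powerset.inf' ⟨∅, by simp⟩
          (fun C => F (prefixUnion' A i ∪ C) - F (prefixUnion' A i) - ∑ j ∈ C, s j))
        ≤ 0 := by
    intro i
    have hEmpty : (∅ : Finset (Fin n)) ∈ (A i).powerset := by simp
    have := Finset.inf'_le
      (fun C => F (prefixUnion' A i ∪ C) - F (prefixUnion' A i) - ∑ j ∈ C, s j) hEmpty
    simpa using this
  refine ⟨hle0, ?_, ?_⟩
  · rintro ⟨h1, h2⟩ i
    refine le_antisymm (hle0 i) ?_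
    apply Finset.le_inf'
    intro C hC
    rw [Finset.mem_powerset] at hC
    have hPC : Disjoint (prefixUnion' A i) C :=
      (disj_prefix A hd i).mono_right hC
    have hsB : (∑ x ∈ prefixUnion' A i, s x) = F (prefixUnion' A i) := by
      have := sum_Dk F hF0 A hd s hs i.val (le_of_lt i.isLt)
      rwa [Dk_val A i] at this
    have hsu : (∑ x ∈ prefixUnion' A i ∪ C, s x)
        = (∑ x ∈ prefixUnion' A i, s x) + ∑ x ∈ C, s x :=
      Finset.sum_union hPC
    have hle := h2 (prefixUnion' A i ∪ C)
    rw [hsu, hsB] at hle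
    linarith
  · intro hz
    have H : ∀ i : Fin m, ∀ C ⊆ A i,
        (∑ j ∈ C, s j) ≤ F (prefixUnion' A i ∪ C) - F (prefixUnion' A i) := by
      intro i C hC
      have hmem : C ∈ (A i).powerset := Finset.mem_powerset.mpr hC
      have := Finset.inf'_le
        (fun C => F (prefixUnion' A i ∪ C) - F (prefixUnion' A i) - ∑ j ∈ C, s j) hmem
      rw [hz i] at this
      linarith
    constructor
    · have := sum_Dk F hF0 A hd s hs m (le_refl m)
      rw [Dk_top A hcov] at this
      simpa using this
    · intro X
      have := sum_inter_Dk F hF hF0 A hd s X H m (le_refl m)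
      rwa [Dk_top A hcov, Finset.inter_univ] at this

/-- Optimality certificate for a basic ordered partition: each subproblem
`min_{C ⊆ A i} F(B (i-1) ∪ C) - F(B (i-1)) - s(C)` has nonpositive value, and
`s ∈ B(F)` iff all these subproblems have value zero. -/
theorem basic_partition_optimality_certificate {n m : ℕ} (F : Finset (Fin n) → ℝ)
    (hF : Submodular F) (hF0 : F ∅ = 0)
    (A : Fin m → Finset (Fin n)) (hA : IsOrderedPartition A)
    (s : Fin n → ℝ)
    (hs : ∀ i : Fin m,
      (∑ j ∈ A i, s j) = F (prefixUnion A i) - F (prefixUnion' A i)) :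
    (∀ i : Fin m,
      ((A i).powerset.inf' ⟨∅, by simp⟩
          (fun C => F (prefixUnion' A i ∪ C) - F (prefixUnion' A i) - ∑ j ∈ C, s j))
        ≤ 0) ∧
    (s ∈ basePolytope F ↔
      ∀ i : Fin m,
        ((A i).powerset.inf' ⟨∅, by simp⟩
            (fun C => F (prefixUnion' A i ∪ C) - F (prefixUnion' A i) - ∑ j ∈ C, s j))
          = 0) := by
  obtain ⟨-, hd, hcov⟩ := hA
  exact basic_partition_optimality_certificate' F hF hF0 A hd hcov s hs
end

section
/- Strict descent from splitting: suppose 𝒜 = (A_1,...,A_m) is an ordered partition, v satisfies v_1 > ... > v_m with v_i|A_i| = u(A_i) − (F(B_i) − F(B_{i−1})), w = Σ_i v_i 1_{A_i}, and s = u − w. If for some i there is C_i with ∅ ⊂ C_i ⊂ A_i and F(B_{i−1} ∪ C_i) − F(B_{i−1}) − s(C_i) < 0, then the directional derivative at t = 0 of the isotonic regression objective along the feasible direction that increases the value on C_i by t and decreases it on A_i \ C_i by t equals 2(F(B_{i−1} ∪ C_i) − F(B_{i−1}) − s(C_i)) < 0; hence splitting A_i into (C_i, A_i \ C_i) strictly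 decreases the optimal value of the isotonic regression problem. -/
open Finset

lemma quad_val (dd K : ℝ) (hK : K ≠ 0) :
    (1/2*K) * ((-dd)/K)^2 + dd * ((-dd)/K) = -(dd^2/(2*K)) := by
  field_simp
  ring

/-- Strict descent from splitting: if a subproblem certifies non-optimality via a set
`C` with `∅ ⊂ C ⊂ A i₀` and `F(B (i₀-1) ∪ C) - F(B (i₀-1)) - s(C) < 0`, then the
directional derivative at `t = 0` of the isotonic objective of the split partition
(increasing the value on `C` by `t`, decreasing it on `A i₀ \ C` by `t`) equals
`2 (F(B (i₀-1) ∪ C) - F(B (i₀-1)) - s(C)) < 0`, hence the split strictly decreases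
the isotonic regression optimal value. -/
theorem split_strict_descent {n m : ℕ} (F : Finset (Fin n) → ℝ)
    (hF : Submodular F) (hF0 : F ∅ = 0) (u : Fin n → ℝ)
    (A : Fin m → Finset (Fin n)) (hA : IsOrderedPartition A)
    (v : Fin m → ℝ)
    (hstrict : ∀ i j : Fin m, i < j → v j < v i)
    (hv : ∀ i : Fin m,
      v i * (A i).card
        = (∑ p ∈ A i, u p) - (F (prefixUnion A i) - F (prefixUnion' A i)))
    (w s : Fin n → ℝ)
    (hw : w = fun p => ∑ i, if p ∈ A i then v i else 0)
    (hsdef : s = u - w)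
    (i₀ : Fin m) (C : Finset (Fin n))
    (hC : C ⊆ A i₀) (hCne : C.Nonempty) (hCproper : C ≠ A i₀)
    (hneg : F (prefixUnion' A i₀ ∪ C) - F (prefixUnion' A i₀) - (∑ j ∈ C, s j) < 0) :
    HasDerivAt
      (fun t : ℝ =>
        (∑ i ∈ Finset.univ.erase i₀,
            (v i * (F (prefixUnion A i) - F (prefixUnion' A i) - ∑ p ∈ A i, u p)
              + (1/2) * (A i).card * (v i)^2))
          + (v i₀ + t) * (F (prefixUnion' A i₀ ∪ C) - F (prefixUnion' A i₀)
              - ∑ p ∈ C, u p)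
          + (v i₀ - t) * (F (prefixUnion A i₀) - F (prefixUnion' A i₀ ∪ C)
              - ∑ p ∈ A i₀ \ C, u p)
          + (1/2) * C.card * (v i₀ + t)^2
          + (1/2) * (A i₀ \ C).card * (v i₀ - t)^2)
      (2 * (F (prefixUnion' A i₀ ∪ C) - F (prefixUnion' A i₀) - ∑ j ∈ C, s j)) 0 ∧
    2 * (F (prefixUnion' A i₀ ∪ C) - F (prefixUnion' A i₀) - ∑ j ∈ C, s j) < 0 ∧
    ∃ t > (0:ℝ),
      ((∑ i ∈ Finset.univ.erase i₀,
            (v i * (F (prefixUnion A i) - F (prefixUnion' A i) - ∑ p ∈ A i, u p)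
              + (1/2) * (A i).card * (v i)^2))
          + (v i₀ + t) * (F (prefixUnion' A i₀ ∪ C) - F (prefixUnion' A i₀)
              - ∑ p ∈ C, u p)
          + (v i₀ - t) * (F (prefixUnion A i₀) - F (prefixUnion' A i₀ ∪ C)
              - ∑ p ∈ A i₀ \ C, u p)
          + (1/2) * C.card * (v i₀ + t)^2
          + (1/2) * (A i₀ \ C).card * (v i₀ - t)^2)
        < ∑ i : Fin m,
            (v i * (F (prefixUnion A i) - F (prefixUnion' A i) - ∑ p ∈ A i, u p)
              + (1/2) * (A i).card * (v i)^2) := by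
  classical
  have hwC : ∀ p ∈ C, w p = v i₀ := by
    intro p hp
    simp only [hw]
    rw [Finset.sum_eq_single i₀]
    · simp [hC hp]
    · intro j _ hj
      have hd := hA.2.1 j i₀ hj
      have : p ∉ A j := fun hpj => Finset.disjoint_left.mp hd hpj (hC hp)
      simp [this]
    · intro h; exact absurd (Finset.mem_univ i₀) h
  have hsC : (∑ j ∈ C, s j) = (∑ p ∈ C, u p) - (C.card : ℝ) * v i₀ := by
    simp only [hsdef, Pi.sub_apply]
    rw [Finset.sum_sub_distrib, Finset.sum_congr rfl hwC, Finset.sum_const,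
      nsmul_eq_mul]
  set B' := prefixUnion' A i₀ with hB'
  set B := prefixUnion A i₀ with hB
  set c1 : ℝ := (C.card : ℝ) with hc1
  set c2 : ℝ := ((A i₀ \ C).card : ℝ) with hc2
  set uC : ℝ := ∑ p ∈ C, u p with huC'
  set uD : ℝ := ∑ p ∈ A i₀ \ C, u p with huD'
  have hcard : c2 + c1 = ((A i₀).card : ℝ) := by
    rw [hc1, hc2, ← Nat.cast_add, Finset.card_sdiff_add_card_eq_card hC]
  have hsum : uD + uC = ∑ p ∈ A i₀, u p := Finset.sum_sdiff hC
  have hKpos : 0 < c1 + c2 := by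
    have hcp : 0 < C.card := Finset.card_pos.mpr hCne
    have h1 : (1:ℝ) ≤ c1 := by rw [hc1]; exact_mod_cast hcp
    have h2 : (0:ℝ) ≤ c2 := by rw [hc2]; positivity
    linarith
  set d : ℝ := 2 * (F (B' ∪ C) - F B' - ∑ j ∈ C, s j) with hd
  have hdneg : d < 0 := by rw [hd]; linarith
  have hv0 := hv i₀
  set X : ℝ := F (B' ∪ C) - F B' - uC with hX
  set Y : ℝ := F B - F (B' ∪ C) - uD with hY
  have hbd : X - Y + c1 * v i₀ - c2 * v i₀ = d := by
    rw [hd, hsC, hX, hY]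
    linear_combination -hv0 + hsum - v i₀ * hcard
  set E : ℝ := ∑ i ∈ Finset.univ.erase i₀,
      (v i * (F (prefixUnion A i) - F (prefixUnion' A i) - ∑ p ∈ A i, u p)
        + (1/2) * (A i).card * (v i)^2) with hE
  set f0 : ℝ := E + v i₀ * X + v i₀ * Y + 1/2 * c1 * v i₀ ^ 2
      + 1/2 * c2 * v i₀ ^ 2 with hf0
  have hfe : (fun t : ℝ => E + (v i₀ + t) * X + (v i₀ - t) * Y
      + 1/2 * c1 * (v i₀ + t)^2 + 1/2 * c2 * (v i₀ - t)^2)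
      = fun t : ℝ => (1/2*(c1+c2)) * t^2 + d * t + f0 := by
    funext t
    rw [← hbd, hf0]
    ring
  have hDa : HasDerivAt (fun t : ℝ => (1/2*(c1+c2)) * t^2 + d * t + f0) d 0 := by
    have h1 : HasDerivAt (fun t : ℝ => t^2) (2*0) 0 := by
      simpa using hasDerivAt_pow 2 (0:ℝ)
    have h2 : HasDerivAt (fun t : ℝ => t) 1 0 := hasDerivAt_id 0
    have h3 := ((h1.const_mul (1/2*(c1+c2))).add (h2.const_mul d)).add_const f0
    simpa using h3
  have htot : (∑ i : Fin m,
      (v i * (F (prefixUnion A i) - F (prefixUnion' A i) - ∑ p ∈ A i, u p)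
        + (1/2) * (A i).card * (v i)^2)) = f0 := by
    rw [← Finset.sum_erase_add _ _ (Finset.mem_univ i₀), ← hE, hf0, hX, hY]
    linear_combination v i₀ * hsum - 1/2 * v i₀^2 * hcard
  refine ⟨?_, hdneg, ?_⟩
  · rw [hfe]; exact hDa
  · refine ⟨(-d)/(c1+c2), div_pos (by linarith) hKpos, ?_⟩
    have happ : E + (v i₀ + (-d)/(c1+c2)) * X + (v i₀ - (-d)/(c1+c2)) * Y
        + 1/2 * c1 * (v i₀ + (-d)/(c1+c2))^2
        + 1/2 * c2 * (v i₀ - (-d)/(c1+c2))^2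
        = (1/2*(c1+c2)) * ((-d)/(c1+c2))^2 + d * ((-d)/(c1+c2)) + f0 :=
      congrFun hfe ((-d)/(c1+c2))
    rw [htot, happ]
    have hKne : c1 + c2 ≠ 0 := ne_of_gt hKpos
    have hval : (1/2*(c1+c2)) * ((-d)/(c1+c2))^2 + d * ((-d)/(c1+c2))
        = -(d^2/(2*(c1+c2))) := quad_val d (c1+c2) hKne
    have hpos : 0 < d^2/(2*(c1+c2)) :=
      div_pos (by rw [sq]; exact mul_pos_of_neg_of_neg hdneg hdneg) (by linarith)
    linarith
end

section
/- ε-approximate duality certificate: if w = Σ_i v_i 1_{A_i} with v_i|A_i| = u(A_i) − (F(B_i) − F(B_{i−1})), s = u − w, and F(C) − s(C) ≥ −ε for all C ⊆ V, then s ∈ B(F_ε) where F_ε = F + ε·1_{card ∈ (1,n)}, and the duality gap f_ε(w) − uᵀw + (1/2)‖w‖² + (1/2)‖s − u‖² equals ε·range(w), where range(w) = max_k w_k − min_k w_k and f_ε is the Lovász extension of F_ε. -/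
open Finset

lemma downset_eq {n : ℕ} (S : Finset (Fin n))
    (h : ∀ j k : Fin n, j ≤ k → k ∈ S → j ∈ S) :
    S = Finset.univ.filter (fun k : Fin n => (k : ℕ) < S.card) := by
  apply Finset.Subset.antisymm
  · intro k hk
    simp only [Finset.mem_filter, Finset.mem_univ, true_and]
    have hsub : Finset.Iic k ⊆ S := fun j hj => h j k (Finset.mem_Iic.mp hj) hk
    have hc := Finset.card_le_card hsub
    rw [Fin.card_Iic] at hc
    omega
  · intro k hk
    simp only [Finset.mem_filter, Finset.mem_univ, true_and] at hk
    by_contra hkS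
    have hsub : S ⊆ Finset.Iio k := by
      intro j hj
      rw [Finset.mem_Iio]
      by_contra hlt
      exact hkS (h k j (le_of_not_gt hlt) hj)
    have hc := Finset.card_le_card hsub
    rw [Fin.card_Iio] at hc
    omega

lemma block_sum {n m : ℕ} (G : Finset (Fin n) → ℝ) (σ : Equiv.Perm (Fin n))
    (β : Fin n → Fin m) (v : Fin m → ℝ)
    (hmono : Monotone (fun k : Fin n => β (σ k))) :
    (∑ k : Fin n, v (β (σ k)) *
      (G ((Finset.Iic k).image σ) - G ((Finset.Iio k).image σ)))
    = ∑ i : Fin m, v i *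
        (G (Finset.univ.filter (fun p => β p ≤ i))
          - G (Finset.univ.filter (fun p => β p < i))) := by
  classical
  set Q : ℕ → Finset (Fin n) :=
    fun t => (Finset.univ.filter fun k : Fin n => (k : ℕ) < t).image σ with hQ
  have hIic : ∀ k : Fin n, (Finset.Iic k).image σ = Q ((k : ℕ) + 1) := by
    intro k
    show (Finset.Iic k).image σ
      = (Finset.univ.filter fun j : Fin n => (j : ℕ) < (k : ℕ) + 1).image σ
    congr 1
    ext j
    simp only [Finset.mem_Iic, Finset.mem_filter, Finset.mem_univ, true_and, Fin.le_def]
    omega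
  have hIio : ∀ k : Fin n, (Finset.Iio k).image σ = Q (k : ℕ) := by
    intro k
    show (Finset.Iio k).image σ
      = (Finset.univ.filter fun j : Fin n => (j : ℕ) < (k : ℕ)).image σ
    congr 1
    ext j
    simp only [Finset.mem_Iio, Finset.mem_filter, Finset.mem_univ, true_and, Fin.lt_def]
  have hfib := Finset.sum_fiberwise_eq_sum_filter Finset.univ Finset.univ
    (fun k : Fin n => β (σ k))
    (fun k : Fin n => v (β (σ k)) *
      (G ((Finset.Iic k).image σ) - G ((Finset.Iio k).image σ)))
  simp only [Finset.mem_univ, Finset.filter_true] at hfib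
  rw [← hfib]
  refine Finset.sum_congr rfl ?_
  intro i _
  set Kle := Finset.univ.filter (fun k : Fin n => β (σ k) ≤ i) with hKle
  set Klt := Finset.univ.filter (fun k : Fin n => β (σ k) < i) with hKlt
  have hdle : Kle = Finset.univ.filter (fun k : Fin n => (k : ℕ) < Kle.card) :=
    downset_eq _ (fun j k hjk hk => by
      simp only [hKle, Finset.mem_filter, Finset.mem_univ, true_and] at *
      exact le_trans (hmono hjk) hk)
  have hdlt : Klt = Finset.univ.filter (fun k : Fin n => (k : ℕ) < Klt.card) :=
    downset_eq _ (fun j k hjk hk => by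
      simp only [hKlt, Finset.mem_filter, Finset.mem_univ, true_and] at *
      exact lt_of_le_of_lt (hmono hjk) hk)
  have hmemle : ∀ k : Fin n, β (σ k) ≤ i ↔ (k : ℕ) < Kle.card := by
    intro k
    constructor
    · intro h
      have : k ∈ Kle := by simp [hKle, h]
      rw [hdle] at this
      simpa using this
    · intro h
      have : k ∈ Kle := by rw [hdle]; simpa using h
      simp only [hKle, Finset.mem_filter, Finset.mem_univ, true_and] at this
      exact this
  have hmemlt : ∀ k : Fin n, β (σ k) < i ↔ (k : ℕ) < Klt.card := by
    intro k
    constructor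
    · intro h
      have : k ∈ Klt := by simp [hKlt, h]
      rw [hdlt] at this
      simpa using this
    · intro h
      have : k ∈ Klt := by rw [hdlt]; simpa using h
      simp only [hKlt, Finset.mem_filter, Finset.mem_univ, true_and] at this
      exact this
  have hab : Klt.card ≤ Kle.card := Finset.card_le_card (by
    intro k hk
    simp only [hKlt, hKle, Finset.mem_filter, Finset.mem_univ, true_and] at *
    exact le_of_lt hk)
  have hble : Kle.card ≤ n := by
    simpa using Finset.card_le_card (Finset.subset_univ Kle)
  have h1 : ∀ k ∈ Finset.univ.filter (fun k : Fin n => β (σ k) = i),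
      v (β (σ k)) * (G ((Finset.Iic k).image σ) - G ((Finset.Iio k).image σ))
        = v i * (G (Q ((k : ℕ) + 1)) - G (Q (k : ℕ))) := by
    intro k hk
    simp only [Finset.mem_filter] at hk
    rw [hk.2, hIic, hIio]
  rw [Finset.sum_congr rfl h1]
  have h2 : Finset.univ.filter (fun k : Fin n => β (σ k) = i)
      = Finset.univ.filter (fun k : Fin n => Klt.card ≤ (k : ℕ) ∧ (k : ℕ) < Kle.card) := by
    ext k
    simp only [Finset.mem_filter, Finset.mem_univ, true_and]
    constructor
    · intro h
      refine ⟨?_, (hmemle k).mp (le_of_eq h)⟩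
      rw [← not_lt, ← hmemlt, h]
      exact lt_irrefl i
    · rintro ⟨ha, hb⟩
      have hle := (hmemle k).mpr hb
      have hnlt : ¬ β (σ k) < i := by rw [hmemlt]; omega
      exact le_antisymm hle (le_of_not_gt hnlt)
  rw [h2]
  have h3 : ∑ k ∈ Finset.univ.filter
        (fun k : Fin n => Klt.card ≤ (k : ℕ) ∧ (k : ℕ) < Kle.card),
      v i * (G (Q ((k : ℕ) + 1)) - G (Q (k : ℕ)))
      = ∑ t ∈ Finset.Ico Klt.card Kle.card, v i * (G (Q (t + 1)) - G (Q t)) := by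
    rw [Finset.sum_filter]
    rw [Fin.sum_univ_eq_sum_range
      (fun t => if Klt.card ≤ t ∧ t < Kle.card then v i * (G (Q (t + 1)) - G (Q t)) else 0) n]
    rw [← Finset.sum_filter]
    congr 1
    ext t
    simp only [Finset.mem_filter, Finset.mem_range, Finset.mem_Ico]
    omega
  rw [h3]
  rw [← Finset.mul_sum]
  congr 1
  have h4 : ∑ t ∈ Finset.Ico Klt.card Kle.card, (G (Q (t + 1)) - G (Q t))
      = G (Q Kle.card) - G (Q Klt.card) := by
    rw [Finset.sum_Ico_eq_sub _ hab, Finset.sum_range_sub (fun t => G (Q t)),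
      Finset.sum_range_sub (fun t => G (Q t))]
    ring
  rw [h4]
  have hQb : Q Kle.card = Finset.univ.filter (fun p => β p ≤ i) := by
    ext p
    simp only [hQ, Finset.mem_image, Finset.mem_filter, Finset.mem_univ, true_and]
    constructor
    · rintro ⟨k, hk, rfl⟩
      exact (hmemle k).mpr hk
    · intro hp
      refine ⟨σ.symm p, ?_, by simp⟩
      rw [← hmemle]
      simpa using hp
  have hQa : Q Klt.card = Finset.univ.filter (fun p => β p < i) := by
    ext p
    simp only [hQ, Finset.mem_image, Finset.mem_filter, Finset.mem_univ, true_and]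
    constructor
    · rintro ⟨k, hk, rfl⟩
      exact (hmemlt k).mpr hk
    · intro hp
      refine ⟨σ.symm p, ?_, by simp⟩
      rw [← hmemlt]
      simpa using hp
  rw [hQb, hQa]

/-- ε-approximate duality certificate: if `F(C) - s(C) ≥ -ε` for all `C`, then
`s ∈ B(F_ε)` with `F_ε = F + ε · 1_{card ∈ (1,n)}`, and the duality gap for `F_ε`
equals `ε · range w`. -/
theorem eps_certificate {n m : ℕ} (hn : 0 < n) (F : Finset (Fin n) → ℝ)
    (hF : Submodular F) (hF0 : F ∅ = 0) (u : Fin n → ℝ) (ε : ℝ) (hε : 0 ≤ ε)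
    (A : Fin m → Finset (Fin n)) (hA : IsOrderedPartition A)
    (v : Fin m → ℝ)
    (hstrict : ∀ i j : Fin m, i < j → v j < v i)
    (hv : ∀ i : Fin m,
      v i * (A i).card
        = (∑ p ∈ A i, u p) - (F (prefixUnion A i) - F (prefixUnion' A i)))
    (w s : Fin n → ℝ)
    (hw : w = fun p => ∑ i, if p ∈ A i then v i else 0)
    (hsdef : s = u - w)
    (hcert : ∀ C : Finset (Fin n), -ε ≤ F C - ∑ j ∈ C, s j) :
    s ∈ basePolytope
        (fun B : Finset (Fin n) =>
          F B + if B.Nonempty ∧ B ≠ Finset.univ then ε else 0) ∧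
    lovasz (fun B : Finset (Fin n) =>
          F B + if B.Nonempty ∧ B ≠ Finset.univ then ε else 0) w
        - (∑ i, u i * w i) + (1/2) * (∑ i, (w i)^2) + (1/2) * (∑ i, (s i - u i)^2)
      = ε * (Finset.univ.sup' ⟨⟨0, hn⟩, Finset.mem_univ _⟩ w
          - Finset.univ.inf' ⟨⟨0, hn⟩, Finset.mem_univ _⟩ w) := by
  classical
  obtain ⟨hne, hdisj, hcover⟩ := hA
  have hm : 0 < m := by
    rcases Nat.eq_zero_or_pos m with h0 | h
    · exfalso
      subst h0
      have hp : (⟨0, hn⟩ : Fin n) ∈ Finset.univ.biUnion A := by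
        rw [hcover]; exact Finset.mem_univ _
      simp only [Finset.mem_biUnion] at hp
      obtain ⟨i, _, _⟩ := hp
      exact i.elim0
    · exact h
  have hex : ∀ p : Fin n, ∃ i, p ∈ A i := by
    intro p
    have hp : p ∈ Finset.univ.biUnion A := by rw [hcover]; exact Finset.mem_univ _
    obtain ⟨i, _, hpi⟩ := Finset.mem_biUnion.mp hp
    exact ⟨i, hpi⟩
  choose β hβ using hex
  have huniq : ∀ p i, p ∈ A i → β p = i := by
    intro p i hpi
    by_contra hne'
    exact (Finset.disjoint_left.mp (hdisj (β p) i hne')) (hβ p) hpi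
  have hwv : ∀ p, w p = v (β p) := by
    intro p
    rw [hw]
    simp only
    rw [Finset.sum_eq_single (β p)]
    · simp [hβ p]
    · intro j _ hj
      have hpj : p ∉ A j := fun hc => hj (huniq p j hc).symm
      simp [hpj]
    · simp
  have hvmono : ∀ i j : Fin m, i ≤ j → v j ≤ v i := by
    intro i j hij
    rcases lt_or_eq_of_le hij with h | h
    · exact le_of_lt (hstrict i j h)
    · rw [h]
  have hBle : ∀ i : Fin m, prefixUnion A i = Finset.univ.filter (fun p => β p ≤ i) := by
    intro i
    ext p
    simp only [prefixUnion, Finset.mem_biUnion, Finset.mem_Iic, Finset.mem_filter,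
      Finset.mem_univ, true_and]
    constructor
    · rintro ⟨j, hj, hpj⟩
      rw [huniq p j hpj]; exact hj
    · intro h
      exact ⟨β p, h, hβ p⟩
  have hBlt : ∀ i : Fin m, prefixUnion' A i = Finset.univ.filter (fun p => β p < i) := by
    intro i
    ext p
    simp only [prefixUnion', Finset.mem_biUnion, Finset.mem_Iio, Finset.mem_filter,
      Finset.mem_univ, true_and]
    constructor
    · rintro ⟨j, hj, hpj⟩
      rw [huniq p j hpj]; exact hj
    · intro h
      exact ⟨β p, h, hβ p⟩
  set σ : Equiv.Perm (Fin n) := Tuple.sort (fun i => -w i) with hσdef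
  have hwanti : ∀ j k : Fin n, j ≤ k → w (σ k) ≤ w (σ j) := by
    intro j k hjk
    have := Tuple.monotone_sort (fun p => -w p) hjk
    simp only [Function.comp_apply] at this
    linarith
  have hmono : Monotone (fun k : Fin n => β (σ k)) := by
    intro j k hjk
    simp only
    by_contra hcon
    push_neg at hcon
    have h1 := hstrict _ _ hcon
    have h2 := hwanti j k hjk
    rw [hwv, hwv] at h2
    exact absurd h2 (not_le.mpr h1)
  have hlov : ∀ G : Finset (Fin n) → ℝ,
      lovasz G w = ∑ i : Fin m, v i * (G (prefixUnion A i) - G (prefixUnion' A i)) := by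
    intro G
    have e1 : lovasz G w = ∑ k : Fin n, v (β (σ k)) *
        (G ((Finset.Iic k).image σ) - G ((Finset.Iio k).image σ)) := by
      show (∑ k : Fin n, w (σ k) *
        (G ((Finset.Iic k).image σ) - G ((Finset.Iio k).image σ))) = _
      exact Finset.sum_congr rfl (fun k _ => by rw [hwv])
    rw [e1, block_sum G σ β v hmono]
    exact Finset.sum_congr rfl (fun i _ => by rw [hBle, hBlt])
  have hsA : ∀ i, (∑ p ∈ A i, s p) = F (prefixUnion A i) - F (prefixUnion' A i) := by
    intro i
    have hwA : ∀ p ∈ A i, w p = v i := fun p hp => by rw [hwv, huniq p i hp]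
    have e : (∑ p ∈ A i, s p) = (∑ p ∈ A i, u p) - v i * (A i).card := by
      rw [hsdef]
      simp only [Pi.sub_apply]
      rw [Finset.sum_sub_distrib]
      congr 1
      rw [Finset.sum_congr rfl hwA, Finset.sum_const, nsmul_eq_mul, mul_comm]
    rw [e, hv i]
    ring
  have htel : ∀ G : Finset (Fin n) → ℝ,
      (∑ i : Fin m, (G (prefixUnion A i) - G (prefixUnion' A i)))
        = G Finset.univ - G ∅ := by
    intro G
    set R : ℕ → Finset (Fin n) :=
      fun t => Finset.univ.filter (fun p => (β p : ℕ) < t) with hR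
    have h1 : ∀ i : Fin m, prefixUnion A i = R ((i : ℕ) + 1) := by
      intro i
      rw [hBle]
      show _ = Finset.univ.filter (fun p => (β p : ℕ) < (i : ℕ) + 1)
      ext p
      simp only [Finset.mem_filter, Finset.mem_univ, true_and, Fin.le_def]
      omega
    have h2 : ∀ i : Fin m, prefixUnion' A i = R (i : ℕ) := by
      intro i
      rw [hBlt]
      show _ = Finset.univ.filter (fun p => (β p : ℕ) < (i : ℕ))
      ext p
      simp only [Finset.mem_filter, Finset.mem_univ, true_and, Fin.lt_def]
    have h3 : (∑ i : Fin m, (G (prefixUnion A i) - G (prefixUnion' A i)))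
        = ∑ i : Fin m, (G (R ((i : ℕ) + 1)) - G (R (i : ℕ))) :=
      Finset.sum_congr rfl (fun i _ => by rw [h1, h2])
    have h5 : (∑ i : Fin m, (G (R ((i : ℕ) + 1)) - G (R (i : ℕ))))
        = ∑ t ∈ Finset.range m, (G (R (t + 1)) - G (R t)) :=
      Fin.sum_univ_eq_sum_range (fun t => G (R (t + 1)) - G (R t)) m
    rw [h3, h5, Finset.sum_range_sub (fun t => G (R t)) m]
    have hRm : R m = Finset.univ := by
      ext p
      simp [hR, (β p).isLt]
    have hR0 : R 0 = ∅ := by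
      ext p
      simp [hR]
    rw [hRm, hR0]
  have hsplit : ∀ f : Fin n → ℝ, (∑ p, f p) = ∑ i : Fin m, ∑ p ∈ A i, f p := by
    intro f
    rw [← hcover, Finset.sum_biUnion]
    intro i _ j _ hij
    exact hdisj i j hij
  have hsum_univ : (∑ p, s p) = F Finset.univ := by
    rw [hsplit s, Finset.sum_congr rfl (fun i _ => hsA i), htel F, hF0, sub_zero]
  constructor
  · constructor
    · beta_reduce
      rw [hsum_univ, if_neg (by simp)]
      ring
    · intro C
      beta_reduce
      rcases eq_or_ne C Finset.univ with rfl | hCuniv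
      · rw [if_neg (by simp), ← hsum_univ]
        simp [le_refl]
      · rcases Finset.eq_empty_or_nonempty C with rfl | hCne
        · simp [hF0]
        · rw [if_pos ⟨hCne, hCuniv⟩]
          have := hcert C
          linarith
  · -- duality gap
    set i0 : Fin m := ⟨m - 1, by omega⟩ with hi0
    set iz : Fin m := ⟨0, hm⟩ with hiz
    have hi0v : (i0 : ℕ) = m - 1 := rfl
    have hizv : (iz : ℕ) = 0 := rfl
    have hBnonempty : ∀ i : Fin m, (prefixUnion A i).Nonempty := by
      intro i
      obtain ⟨p, hp⟩ := hne i
      exact ⟨p, by rw [hBle]; simp [huniq p i hp]⟩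
    have hBi0 : prefixUnion A i0 = Finset.univ := by
      rw [hBle]
      ext p
      simp only [Finset.mem_filter, Finset.mem_univ, true_and, iff_true, Fin.le_def]
      have := (β p).isLt
      omega
    have hBne : ∀ i : Fin m, i ≠ i0 → prefixUnion A i ≠ Finset.univ := by
      intro i hi hcon
      obtain ⟨p, hp⟩ := hne i0
      have hpB : p ∈ prefixUnion A i := by rw [hcon]; exact Finset.mem_univ _
      rw [hBle] at hpB
      simp only [Finset.mem_filter, Finset.mem_univ, true_and] at hpB
      rw [huniq p i0 hp] at hpB
      apply hi
      apply le_antisymm _ hpB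
      rw [Fin.le_def]
      have := i.isLt
      omega
    have hB'ne_univ : ∀ i : Fin m, prefixUnion' A i ≠ Finset.univ := by
      intro i hcon
      obtain ⟨p, hp⟩ := hne i
      have hpB : p ∈ prefixUnion' A i := by rw [hcon]; exact Finset.mem_univ _
      rw [hBlt] at hpB
      simp only [Finset.mem_filter, Finset.mem_univ, true_and] at hpB
      rw [huniq p i hp] at hpB
      exact lt_irrefl i hpB
    have hB'empty : prefixUnion' A iz = ∅ := by
      rw [hBlt]
      ext p
      simp only [Finset.mem_filter, Finset.mem_univ, true_and, Finset.notMem_empty,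
        iff_false, Fin.lt_def]
      omega
    have hB'nonempty : ∀ i : Fin m, i ≠ iz → (prefixUnion' A i).Nonempty := by
      intro i hi
      obtain ⟨p, hp⟩ := hne iz
      refine ⟨p, ?_⟩
      rw [hBlt]
      simp only [Finset.mem_filter, Finset.mem_univ, true_and]
      rw [huniq p iz hp]
      rw [Fin.lt_def]
      have : (i : ℕ) ≠ 0 := fun hc => hi (by
        apply Fin.ext
        rw [hizv, hc])
      omega
    have hχB : ∀ i : Fin m,
        (if (prefixUnion A i).Nonempty ∧ prefixUnion A i ≠ Finset.univ then ε else 0)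
          = ε - (if i = i0 then ε else 0) := by
      intro i
      rcases eq_or_ne i i0 with rfl | hi
      · rw [if_neg (by simp [hBi0]), if_pos rfl]
        ring
      · rw [if_pos ⟨hBnonempty i, hBne i hi⟩, if_neg hi]
        ring
    have hχB' : ∀ i : Fin m,
        (if (prefixUnion' A i).Nonempty ∧ prefixUnion' A i ≠ Finset.univ then ε else 0)
          = ε - (if i = iz then ε else 0) := by
      intro i
      rcases eq_or_ne i iz with rfl | hi
      · rw [if_neg (by simp [hB'empty]), if_pos rfl]
        ring
      · rw [if_pos ⟨hB'nonempty i hi, hB'ne_univ i⟩, if_neg hi]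
        ring
    have hlovFε : lovasz (fun B : Finset (Fin n) =>
          F B + if B.Nonempty ∧ B ≠ Finset.univ then ε else 0) w
        = (∑ i : Fin m, v i * (F (prefixUnion A i) - F (prefixUnion' A i)))
          + ε * (v iz - v i0) := by
      rw [hlov]
      have e : ∀ i : Fin m,
          v i * ((F (prefixUnion A i)
              + if (prefixUnion A i).Nonempty ∧ prefixUnion A i ≠ Finset.univ then ε else 0)
            - (F (prefixUnion' A i)
              + if (prefixUnion' A i).Nonempty ∧ prefixUnion' A i ≠ Finset.univ then ε else 0))
          = v i * (F (prefixUnion A i) - F (prefixUnion' A i))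
            + (v i * (if i = iz then ε else 0) - v i * (if i = i0 then ε else 0)) := by
        intro i
        rw [hχB i, hχB' i]
        ring
      rw [Finset.sum_congr rfl (fun i _ => e i), Finset.sum_add_distrib,
        Finset.sum_sub_distrib]
      simp only [mul_ite, mul_zero]
      rw [Finset.sum_ite_eq' Finset.univ iz (fun i => v i * ε),
        Finset.sum_ite_eq' Finset.univ i0 (fun i => v i * ε)]
      simp only [Finset.mem_univ, if_true]
      ring
    have hsw : (∑ p, s p * w p)
        = ∑ i : Fin m, v i * (F (prefixUnion A i) - F (prefixUnion' A i)) := by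
      rw [hsplit (fun p => s p * w p)]
      refine Finset.sum_congr rfl (fun i _ => ?_)
      have e : ∀ p ∈ A i, s p * w p = v i * s p := by
        intro p hp
        rw [hwv, huniq p i hp]
        ring
      rw [Finset.sum_congr rfl e, ← Finset.mul_sum, hsA i]
    have hsw2 : (∑ p, s p * w p) = (∑ p, u p * w p) - ∑ p, (w p) ^ 2 := by
      rw [hsdef, ← Finset.sum_sub_distrib]
      refine Finset.sum_congr rfl (fun p _ => ?_)
      simp only [Pi.sub_apply]
      ring
    have hsq : (∑ p, (s p - u p) ^ 2) = ∑ p, (w p) ^ 2 := by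
      refine Finset.sum_congr rfl (fun p _ => ?_)
      rw [hsdef]
      simp only [Pi.sub_apply]
      ring
    have hsup : Finset.univ.sup' ⟨⟨0, hn⟩, Finset.mem_univ _⟩ w = v iz := by
      apply le_antisymm
      · apply Finset.sup'_le
        intro p _
        rw [hwv]
        exact hvmono iz (β p) (by rw [Fin.le_def]; omega)
      · obtain ⟨p, hp⟩ := hne iz
        have : v iz = w p := by rw [hwv, huniq p iz hp]
        rw [this]
        exact Finset.le_sup' w (Finset.mem_univ p)
    have hinf : Finset.univ.inf' ⟨⟨0, hn⟩, Finset.mem_univ _⟩ w = v i0 := by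
      apply le_antisymm
      · obtain ⟨p, hp⟩ := hne i0
        have : v i0 = w p := by rw [hwv, huniq p i0 hp]
        rw [this]
        exact Finset.inf'_le w (Finset.mem_univ p)
      · apply Finset.le_inf'
        intro p _
        rw [hwv]
        refine hvmono (β p) i0 ?_
        rw [Fin.le_def]
        have := (β p).isLt
        omega
    rw [hlovFε, hsup, hinf]
    have key : (∑ i, u i * w i) - (∑ i, (w i) ^ 2)
        = ∑ i : Fin m, v i * (F (prefixUnion A i) - F (prefixUnion' A i)) := by
      rw [← hsw2, hsw]
    rw [hsq] at *
    linarith [key]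
end

section
/- Decomposable TV duality: for submodular F_1, F_2 with F_j(∅)=0, min_{w ∈ ℝ^n} f_1(w) + f_2(w) − uᵀw + (1/2)‖w‖² = max_{s_1 ∈ B(F_1), s_2 ∈ B(F_2)} −(1/2)‖s_1 + s_2 − u‖², with w = u − s_1 − s_2 at optimality; moreover B(F_1 + F_2) = B(F_1) + B(F_2), so this is the projection of u onto B(F_1) + B(F_2). -/
open Finset

open Pointwise

namespace TVD

variable {n : ℕ}

/-- chain sets -/
def Ck (σ : Equiv.Perm (Fin n)) (m : ℕ) : Finset (Fin n) :=
  (Finset.univ.filter fun j : Fin n => (σ.symm j : ℕ) < m)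

lemma mem_Ck {σ : Equiv.Perm (Fin n)} {m : ℕ} {i : Fin n} :
    i ∈ Ck σ m ↔ (σ.symm i : ℕ) < m := by simp [Ck]

lemma Ck_zero (σ : Equiv.Perm (Fin n)) : Ck σ 0 = ∅ := by
  ext i; simp [mem_Ck]

lemma Ck_top (σ : Equiv.Perm (Fin n)) {m : ℕ} (h : n ≤ m) : Ck σ m = univ := by
  ext i; simpa [mem_Ck] using lt_of_lt_of_le (σ.symm i).isLt h

lemma Ck_succ (σ : Equiv.Perm (Fin n)) {m : ℕ} (h : m < n) :
    Ck σ (m + 1) = insert (σ ⟨m, h⟩) (Ck σ m) := by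
  ext i
  simp only [mem_Ck, Finset.mem_insert, Nat.lt_succ_iff_lt_or_eq]
  constructor
  · rintro (h1 | h1)
    · exact Or.inr h1
    · have : σ.symm i = ⟨m, h⟩ := Fin.ext h1
      exact Or.inl (by rw [← this]; simp)
  · rintro (rfl | h1)
    · right; simp
    · exact Or.inl h1

lemma not_mem_Ck (σ : Equiv.Perm (Fin n)) {m : ℕ} (h : m < n) :
    σ ⟨m, h⟩ ∉ Ck σ m := by simp [mem_Ck]

noncomputable def greedy (F : Finset (Fin n) → ℝ) (σ : Equiv.Perm (Fin n)) : Fin n → ℝ :=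
  fun i => F (Ck σ ((σ.symm i : ℕ) + 1)) - F (Ck σ (σ.symm i))

lemma greedy_apply (F : Finset (Fin n) → ℝ) (σ : Equiv.Perm (Fin n)) {m : ℕ} (h : m < n) :
    greedy F σ (σ ⟨m, h⟩) = F (Ck σ (m + 1)) - F (Ck σ m) := by
  simp [greedy]

lemma sum_greedy_Ck (F : Finset (Fin n) → ℝ) (σ : Equiv.Perm (Fin n)) (m : ℕ) :
    ∑ i ∈ Ck σ m, greedy F σ i = F (Ck σ m) - F (Ck σ 0) := by
  induction m with
  | zero => simp [Ck_zero]
  | succ m ih =>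
    rcases lt_or_ge m n with h | h
    · rw [Ck_succ σ h, Finset.sum_insert (not_mem_Ck σ h), ih, greedy_apply F σ h,
        ← Ck_succ σ h]
      ring
    · rw [Ck_top σ h, Ck_top σ (h.trans (Nat.le_succ m))] at *
      exact ih

lemma sum_greedy_inter (F : Finset (Fin n) → ℝ) (hF : Submodular F) (hF0 : F ∅ = 0)
    (σ : Equiv.Perm (Fin n)) (A : Finset (Fin n)) (m : ℕ) :
    ∑ i ∈ A ∩ Ck σ m, greedy F σ i ≤ F (A ∩ Ck σ m) := by
  induction m with
  | zero => simp [Ck_zero, hF0]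
  | succ m ih =>
    rcases lt_or_ge m n with h | h
    · set a := σ ⟨m, h⟩ with ha
      by_cases hA : a ∈ A
      · have hsplit : A ∩ Ck σ (m + 1) = insert a (A ∩ Ck σ m) := by
          rw [Ck_succ σ h]
          ext i
          simp only [Finset.mem_inter, Finset.mem_insert]
          constructor
          · rintro ⟨hiA, rfl | hi⟩
            · exact Or.inl rfl
            · exact Or.inr ⟨hiA, hi⟩
          · rintro (rfl | ⟨hiA, hi⟩)
            · exact ⟨hA, Or.inl rfl⟩
            · exact ⟨hiA, Or.inr hi⟩
        have hnot : a ∉ A ∩ Ck σ m := fun hc => not_mem_Ck σ h (Finset.mem_inter.1 hc).2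
        rw [hsplit, Finset.sum_insert hnot, greedy_apply F σ h]
        -- submodularity : F(X ∪ Y) + F(X ∩ Y) ≤ F X + F Y with X = insert a (A ∩ Ck m), Y = Ck m
        have hunion : insert a (A ∩ Ck σ m) ∪ Ck σ m = Ck σ (m + 1) := by
          rw [Ck_succ σ h]
          ext i
          simp only [Finset.mem_union, Finset.mem_insert, Finset.mem_inter]
          tauto
        have hinter : (insert a (A ∩ Ck σ m)) ∩ Ck σ m = A ∩ Ck σ m := by
          ext i
          simp only [Finset.mem_inter, Finset.mem_insert]
          constructor
          · rintro ⟨rfl | ⟨h1, h2⟩, h3⟩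
            · exact absurd h3 (not_mem_Ck σ h)
            · exact ⟨h1, h3⟩
          · rintro ⟨h1, h2⟩; exact ⟨Or.inr ⟨h1, h2⟩, h2⟩
        have hsub := hF (insert a (A ∩ Ck σ m)) (Ck σ m)
        rw [hunion, hinter] at hsub
        rw [← hsplit] at hsub ⊢
        linarith
      · have hsame : A ∩ Ck σ (m + 1) = A ∩ Ck σ m := by
          rw [Ck_succ σ h]
          ext i
          simp only [Finset.mem_inter, Finset.mem_insert]
          constructor
          · rintro ⟨h1, rfl | h2⟩
            · exact absurd h1 hA
            · exact ⟨h1, h2⟩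
          · rintro ⟨h1, h2⟩; exact ⟨h1, Or.inr h2⟩
        rw [hsame]; exact ih
    · rw [Ck_top σ (h.trans (Nat.le_succ m)), ← Ck_top σ h]
      exact ih

lemma greedy_mem (F : Finset (Fin n) → ℝ) (hF : Submodular F) (hF0 : F ∅ = 0)
    (σ : Equiv.Perm (Fin n)) : greedy F σ ∈ basePolytope F := by
  constructor
  · have := sum_greedy_Ck F σ n
    rwa [Ck_top σ le_rfl, Ck_zero, hF0, sub_zero] at this
  · intro A
    have := sum_greedy_inter F hF hF0 σ A n
    rwa [Ck_top σ le_rfl, Finset.inter_univ] at this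

/-- The two image sets in `lovasz` are chain sets. -/
lemma image_Iic (σ : Equiv.Perm (Fin n)) (k : Fin n) :
    (Finset.Iic k).image σ = Ck σ ((k : ℕ) + 1) := by
  ext i
  simp only [Finset.mem_image, Finset.mem_Iic, mem_Ck]
  constructor
  · rintro ⟨j, hj, rfl⟩
    rw [Equiv.symm_apply_apply]
    exact Nat.lt_succ_of_le hj
  · intro hi
    exact ⟨σ.symm i, Nat.lt_succ_iff.1 hi, by simp⟩

lemma image_Iio (σ : Equiv.Perm (Fin n)) (k : Fin n) :
    (Finset.Iio k).image σ = Ck σ (k : ℕ) := by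
  ext i
  simp only [Finset.mem_image, Finset.mem_Iio, mem_Ck]
  constructor
  · rintro ⟨j, hj, rfl⟩
    rw [Equiv.symm_apply_apply]
    exact hj
  · intro hi
    exact ⟨σ.symm i, hi, by simp⟩

lemma lovasz_eq_inner (F : Finset (Fin n) → ℝ) (w : Fin n → ℝ) :
    lovasz F w = ∑ i, greedy F (Tuple.sort fun i => -w i) i * w i := by
  set σ := Tuple.sort fun i => -w i with hσ
  have : ∀ k : Fin n, w (σ k) * (F ((Finset.Iic k).image σ) - F ((Finset.Iio k).image σ))
      = greedy F σ (σ k) * w (σ k) := by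
    intro k
    rw [image_Iic, image_Iio]
    have : greedy F σ (σ k) = F (Ck σ ((k : ℕ) + 1)) - F (Ck σ (k : ℕ)) := by
      simp [greedy]
    rw [this]; ring
  rw [lovasz]
  simp only [← hσ]
  rw [Finset.sum_congr rfl fun k _ => this k]
  exact Equiv.sum_comp σ (fun i => greedy F σ i * w i)


lemma abel_nonneg (n : ℕ) (v D : ℕ → ℝ) (hD0 : D 0 = 0) (hDn : D n = 0)
    (hDpos : ∀ m, 0 ≤ D m) (hv : ∀ m, m + 1 < n → v (m + 1) ≤ v m) :
    0 ≤ ∑ m ∈ Finset.range n, v m * (D (m + 1) - D m) := by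
  cases n with
  | zero => simp
  | succ N =>
    have hsplit : ∀ m, v m * (D (m + 1) - D m) = v m * D (m + 1) - v m * D m := by
      intro m; ring
    rw [Finset.sum_congr rfl fun m _ => hsplit m, Finset.sum_sub_distrib]
    rw [Finset.sum_range_succ (fun m => v m * D (m + 1)) N,
      Finset.sum_range_succ' (fun m => v m * D m) N]
    rw [hD0, hDn, mul_zero, mul_zero, add_zero, add_zero, ← Finset.sum_sub_distrib]
    apply Finset.sum_nonneg
    intro m hm
    rw [Finset.mem_range] at hm
    have h1 : v (m + 1) ≤ v m := hv m (by omega)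
    have h2 : 0 ≤ D (m + 1) := hDpos (m + 1)
    nlinarith

lemma sorted_antitone (w : Fin n → ℝ) {m : ℕ} (h1 : m + 1 < n) :
    w (Tuple.sort (fun i => -w i) ⟨m + 1, h1⟩) ≤
      w (Tuple.sort (fun i => -w i) ⟨m, by omega⟩) := by
  have := Tuple.monotone_sort (fun i => -w i)
    (a := (⟨m, by omega⟩ : Fin n)) (b := ⟨m + 1, h1⟩) (by simp [Fin.le_def])
  simpa using this

lemma inner_le_lovasz (F : Finset (Fin n) → ℝ) (hF0 : F ∅ = 0)
    {s : Fin n → ℝ} (hs : s ∈ basePolytope F) (w : Fin n → ℝ) :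
    ∑ i, s i * w i ≤ lovasz F w := by
  set σ := Tuple.sort fun i => -w i with hσ
  set D : ℕ → ℝ := fun m => F (Ck σ m) - ∑ i ∈ Ck σ m, s i with hD
  set v : ℕ → ℝ := fun m => if h : m < n then w (σ ⟨m, h⟩) else 0 with hv
  have hD0 : D 0 = 0 := by simp [hD, Ck_zero, hF0]
  have hDn : D n = 0 := by simp [hD, Ck_top σ le_rfl, hs.1]
  have hDpos : ∀ m, 0 ≤ D m := fun m => sub_nonneg.2 (hs.2 (Ck σ m))
  have hvmono : ∀ m, m + 1 < n → v (m + 1) ≤ v m := by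
    intro m hm
    simp only [hv, dif_pos hm, dif_pos (by omega : m < n)]
    exact sorted_antitone w hm
  have key := abel_nonneg n v D hD0 hDn hDpos hvmono
  -- rewrite both sides as range sums
  have hlov : lovasz F w = ∑ m ∈ Finset.range n, v m * (F (Ck σ (m + 1)) - F (Ck σ m)) := by
    rw [lovasz]
    simp only [← hσ]
    rw [← Fin.sum_univ_eq_sum_range (fun m => v m * (F (Ck σ (m + 1)) - F (Ck σ m))) n]
    apply Finset.sum_congr rfl
    intro k _
    rw [image_Iic, image_Iio]
    simp only [hv, dif_pos k.isLt, Fin.eta]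
  have hsum : (∑ i, s i * w i) =
      ∑ m ∈ Finset.range n, v m * ((∑ i ∈ Ck σ (m + 1), s i) - ∑ i ∈ Ck σ m, s i) := by
    rw [← Equiv.sum_comp σ (fun i => s i * w i)]
    rw [← Fin.sum_univ_eq_sum_range
      (fun m => v m * ((∑ i ∈ Ck σ (m + 1), s i) - ∑ i ∈ Ck σ m, s i)) n]
    apply Finset.sum_congr rfl
    intro k _
    have hins : (∑ i ∈ Ck σ ((k : ℕ) + 1), s i) - ∑ i ∈ Ck σ (k : ℕ), s i = s (σ k) := by
      rw [Ck_succ σ k.isLt, Finset.sum_insert (not_mem_Ck σ k.isLt), Fin.eta]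
      ring
    rw [hins]
    simp only [hv, dif_pos k.isLt, Fin.eta]
    ring
  have : lovasz F w - ∑ i, s i * w i = ∑ m ∈ Finset.range n, v m * (D (m + 1) - D m) := by
    rw [hlov, hsum, ← Finset.sum_sub_distrib]
    apply Finset.sum_congr rfl
    intro m _
    simp only [hD]
    ring
  linarith [key, this ▸ key]

lemma lovasz_eq_sup (F : Finset (Fin n) → ℝ) (hF : Submodular F) (hF0 : F ∅ = 0) (w : Fin n → ℝ) :
    ∃ s ∈ basePolytope F, (∑ i, s i * w i) = lovasz F w :=
  ⟨greedy F (Tuple.sort fun i => -w i), greedy_mem F hF hF0 _,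
    (lovasz_eq_inner F w).symm⟩



lemma convex_basePolytope (F : Finset (Fin n) → ℝ) : Convex ℝ (basePolytope F) := by
  intro s hs t ht a b ha hb hab
  constructor
  · have : ∑ i, (a • s + b • t) i = a * ∑ i, s i + b * ∑ i, t i := by
      simp only [Pi.add_apply, Pi.smul_apply, smul_eq_mul, Finset.mul_sum]
      rw [← Finset.sum_add_distrib]
    rw [this, hs.1, ht.1]
    linear_combination (F Finset.univ) * hab
  · intro A
    have : ∑ i ∈ A, (a • s + b • t) i = a * ∑ i ∈ A, s i + b * ∑ i ∈ A, t i := by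
      simp only [Pi.add_apply, Pi.smul_apply, smul_eq_mul, Finset.mul_sum]
      rw [← Finset.sum_add_distrib]
    rw [this]
    have h4 : a * F A + b * F A = F A := by linear_combination (F A) * hab
    nlinarith [mul_le_mul_of_nonneg_left (hs.2 A) ha, mul_le_mul_of_nonneg_left (ht.2 A) hb]

lemma isClosed_basePolytope (F : Finset (Fin n) → ℝ) : IsClosed (basePolytope F) := by
  have : basePolytope F = {s : Fin n → ℝ | ∑ i, s i = F Finset.univ} ∩
      ⋂ A : Finset (Fin n), {s : Fin n → ℝ | ∑ i ∈ A, s i ≤ F A} := by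
    ext s
    simp [basePolytope, Set.mem_iInter]
  rw [this]
  refine IsClosed.inter (isClosed_eq (by fun_prop) continuous_const)
    (isClosed_iInter fun A => isClosed_le (by fun_prop) continuous_const)

lemma isCompact_basePolytope (F : Finset (Fin n) → ℝ) : IsCompact (basePolytope F) := by
  refine IsCompact.of_isClosed_subset
    (isCompact_univ_pi fun i => isCompact_Icc
      (a := F Finset.univ - F (Finset.univ.erase i)) (b := F {i}))
    (isClosed_basePolytope F) ?_
  intro s hs
  intro i _
  constructor
  · have h1 : ∑ j ∈ Finset.univ.erase i, s j ≤ F (Finset.univ.erase i) := hs.2 _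
    have h2 : s i + ∑ j ∈ Finset.univ.erase i, s j = ∑ j, s j :=
      Finset.add_sum_erase Finset.univ s (Finset.mem_univ i)
    have h3 := hs.1
    linarith
  · have := hs.2 {i}
    simpa using this

lemma lovasz_add (F₁ F₂ : Finset (Fin n) → ℝ) (w : Fin n → ℝ) :
    lovasz (fun B => F₁ B + F₂ B) w = lovasz F₁ w + lovasz F₂ w := by
  simp only [lovasz, ← Finset.sum_add_distrib]
  exact Finset.sum_congr rfl fun k _ => by ring

lemma submodular_add {F₁ F₂ : Finset (Fin n) → ℝ} (hF₁ : Submodular F₁) (hF₂ : Submodular F₂) :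
    Submodular (fun B => F₁ B + F₂ B) := by
  intro A B
  have := hF₁ A B
  have := hF₂ A B
  dsimp only
  linarith

open Pointwise in
lemma basePolytope_add (F₁ F₂ : Finset (Fin n) → ℝ)
    (hF₁ : Submodular F₁) (hF₂ : Submodular F₂) (hF₁0 : F₁ ∅ = 0) (hF₂0 : F₂ ∅ = 0) :
    basePolytope (fun B : Finset (Fin n) => F₁ B + F₂ B)
      = basePolytope F₁ + basePolytope F₂ := by
  apply Set.Subset.antisymm
  · intro s hs
    by_contra hns
    have hconv : Convex ℝ (basePolytope F₁ + basePolytope F₂) :=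
      (convex_basePolytope F₁).add (convex_basePolytope F₂)
    have hclosed : IsClosed (basePolytope F₁ + basePolytope F₂) :=
      ((isCompact_basePolytope F₁).add (isCompact_basePolytope F₂)).isClosed
    obtain ⟨f, c, hfb, hfs⟩ := geometric_hahn_banach_closed_point hconv hclosed hns
    set w : Fin n → ℝ := fun i => f (Pi.single i (1:ℝ) : Fin n → ℝ) with hw
    have hf : ∀ x : Fin n → ℝ, f x = ∑ i, x i * w i := by
      intro x
      have hx : x = ∑ i, Pi.single i (x i) := (Finset.univ_sum_single x).symm
      conv_lhs => rw [hx]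
      rw [map_sum]
      apply Finset.sum_congr rfl
      intro i _
      have : Pi.single i (x i) = x i • (Pi.single i (1:ℝ) : Fin n → ℝ) := by
        rw [← Pi.single_smul, smul_eq_mul, mul_one]
      rw [this, map_smul, smul_eq_mul]
    set σ := Tuple.sort fun i => -w i
    have hg₁ := greedy_mem F₁ hF₁ hF₁0 σ
    have hg₂ := greedy_mem F₂ hF₂ hF₂0 σ
    have hmem : greedy F₁ σ + greedy F₂ σ ∈ basePolytope F₁ + basePolytope F₂ :=
      Set.add_mem_add hg₁ hg₂
    have hlt : f (greedy F₁ σ + greedy F₂ σ) < c := hfb _ hmem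
    have heq : f (greedy F₁ σ + greedy F₂ σ) = lovasz F₁ w + lovasz F₂ w := by
      rw [hf, lovasz_eq_inner F₁ w, lovasz_eq_inner F₂ w, ← Finset.sum_add_distrib]
      apply Finset.sum_congr rfl
      intro i _
      simp only [Pi.add_apply]
      ring
    have hle : f s ≤ lovasz (fun B => F₁ B + F₂ B) w := by
      rw [hf]
      exact inner_le_lovasz _ (by simp [hF₁0, hF₂0]) hs w
    rw [lovasz_add] at hle
    rw [heq] at hlt
    linarith
  · rintro x ⟨s₁, hs₁, s₂, hs₂, rfl⟩
    constructor
    · have : ∑ i, (s₁ + s₂) i = (∑ i, s₁ i) + ∑ i, s₂ i := by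
        simp only [Pi.add_apply]
        rw [← Finset.sum_add_distrib]
      rw [this, hs₁.1, hs₂.1]
    · intro A
      have : ∑ i ∈ A, (s₁ + s₂) i = (∑ i ∈ A, s₁ i) + ∑ i ∈ A, s₂ i := by
        simp only [Pi.add_apply]
        rw [← Finset.sum_add_distrib]
      rw [this]
      exact add_le_add (hs₁.2 A) (hs₂.2 A)



lemma sum_ident (s u w : Fin n → ℝ) :
    (∑ i, s i * w i) - (∑ i, u i * w i) + (1/2) * (∑ i, (w i)^2)
      = (1/2) * (∑ i, (w i - (u i - s i))^2) - (1/2) * ∑ i, (s i - u i)^2 := by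
  rw [Finset.mul_sum, Finset.mul_sum, Finset.mul_sum]
  rw [← Finset.sum_sub_distrib, ← Finset.sum_add_distrib, ← Finset.sum_sub_distrib]
  exact Finset.sum_congr rfl fun i _ => by ring

lemma proj_spec {B : Set (Fin n → ℝ)} (hne : B.Nonempty) (hcomp : IsCompact B)
    (hconv : Convex ℝ B) (u : Fin n → ℝ) :
    ∃ p ∈ B, (∀ s ∈ B, (∑ i, (p i - u i)^2) ≤ ∑ i, (s i - u i)^2) ∧
      (∀ s ∈ B, ∑ i, (u i - p i) * (s i - p i) ≤ 0) := by
  have hcont : Continuous fun s : Fin n → ℝ => ∑ i, (s i - u i)^2 := by fun_prop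
  obtain ⟨p, hpB, hmin⟩ := hcomp.exists_isMinOn hne hcont.continuousOn
  refine ⟨p, hpB, fun s hs => hmin hs, ?_⟩
  intro s hs
  by_contra hc
  push_neg at hc
  set A := ∑ i, (u i - p i) * (s i - p i) with hA
  set C := ∑ i, (s i - p i)^2 with hC
  have hC0 : 0 ≤ C := Finset.sum_nonneg fun i _ => sq_nonneg _
  have key : ∀ t : ℝ, 0 ≤ t → t ≤ 1 → 0 ≤ -2*t*A + t^2*C := by
    intro t ht0 ht1
    have hmem : ((1-t) • p + t • s) ∈ B := hconv hpB hs (by linarith) ht0 (by ring)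
    have hle := hmin hmem
    have hexp : ∑ i, (((1-t) • p + t • s) i - u i)^2
        = (∑ i, (p i - u i)^2) + (-2*t*A + t^2*C) := by
      have step : ∀ i : Fin n, (((1-t) • p + t • s) i - u i)^2
          = (p i - u i)^2 + ((-2*t) * ((u i - p i) * (s i - p i)) + t^2 * (s i - p i)^2) := by
        intro i
        simp only [Pi.add_apply, Pi.smul_apply, smul_eq_mul]
        ring
      rw [Finset.sum_congr rfl fun i _ => step i, Finset.sum_add_distrib,
        Finset.sum_add_distrib, ← Finset.mul_sum, ← Finset.mul_sum, hA, hC]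
    have : (∑ i, (p i - u i)^2) ≤ (∑ i, (p i - u i)^2) + (-2*t*A + t^2*C) := by
      rw [← hexp]; exact hle
    linarith
  rcases eq_or_lt_of_le hC0 with hCz | hCpos
  · have := key 1 zero_le_one le_rfl
    rw [← hCz] at this
    nlinarith
  · set t := min 1 (A/C) with ht
    have ht0 : 0 < t := lt_min one_pos (div_pos hc hCpos)
    have ht1 : t ≤ 1 := min_le_left _ _
    have htC : t * C ≤ A := by
      have : t ≤ A / C := min_le_right _ _
      rwa [le_div_iff₀ hCpos] at this
    have hk := key t ht0.le ht1
    nlinarith [mul_le_mul_of_nonneg_left htC ht0.le, mul_pos ht0 hc]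

lemma proj_unique {B : Set (Fin n → ℝ)} (hconv : Convex ℝ B) (u : Fin n → ℝ)
    {p q : Fin n → ℝ} (hp : p ∈ B) (hq : q ∈ B)
    (hpmin : ∀ s ∈ B, (∑ i, (p i - u i)^2) ≤ ∑ i, (s i - u i)^2)
    (hqmin : ∀ s ∈ B, (∑ i, (q i - u i)^2) ≤ ∑ i, (s i - u i)^2) : p = q := by
  have hm : ((1-(1/2:ℝ)) • p + (1/2:ℝ) • q) ∈ B :=
    hconv hp hq (by norm_num) (by norm_num) (by ring)
  have hident : (∑ i, (p i - u i)^2) + (∑ i, (q i - u i)^2)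
      = 2 * (∑ i, (((1-(1/2:ℝ)) • p + (1/2:ℝ) • q) i - u i)^2)
        + (1/2) * ∑ i, (p i - q i)^2 := by
    rw [Finset.mul_sum, Finset.mul_sum, ← Finset.sum_add_distrib, ← Finset.sum_add_distrib]
    apply Finset.sum_congr rfl
    intro i _
    simp only [Pi.add_apply, Pi.smul_apply, smul_eq_mul]
    ring
  have h1 := hpmin q hq
  have h2 := hqmin p hp
  have h3 := hpmin _ hm
  have hz : ∑ i, (p i - q i)^2 = 0 := by
    have hge : 0 ≤ ∑ i, (p i - q i)^2 := Finset.sum_nonneg fun i _ => sq_nonneg _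
    have : (∑ i, (p i - q i)^2) ≤ 0 := by linarith
    linarith
  funext i
  have := (Finset.sum_eq_zero_iff_of_nonneg (fun i _ => sq_nonneg (p i - q i))).1 hz i
    (Finset.mem_univ i)
  have := pow_eq_zero_iff (n := 2) (by norm_num) |>.1 this
  linarith [sub_eq_zero.1 this]

end TVD

open TVD

/-- Decomposable TV duality: primal/dual equality, optimality relation
`w = u - s₁ - s₂`, and `B(F₁ + F₂) = B(F₁) + B(F₂)` (Minkowski sum). -/
theorem decomposable_tv_duality {n : ℕ} (F₁ F₂ : Finset (Fin n) → ℝ)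
    (hF₁ : Submodular F₁) (hF₂ : Submodular F₂)
    (hF₁0 : F₁ ∅ = 0) (hF₂0 : F₂ ∅ = 0) (u : Fin n → ℝ) :
    sInf {x : ℝ | ∃ w : Fin n → ℝ,
        x = lovasz F₁ w + lovasz F₂ w - (∑ i, u i * w i) + (1/2) * ∑ i, (w i)^2}
      = sSup {x : ℝ | ∃ s₁ ∈ basePolytope F₁, ∃ s₂ ∈ basePolytope F₂,
          x = -(1/2) * ∑ i, (s₁ i + s₂ i - u i)^2} ∧
    (∀ w s₁ s₂ : Fin n → ℝ,
      (∀ w' : Fin n → ℝ,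
        lovasz F₁ w + lovasz F₂ w - (∑ i, u i * w i) + (1/2) * ∑ i, (w i)^2
          ≤ lovasz F₁ w' + lovasz F₂ w' - (∑ i, u i * w' i) + (1/2) * ∑ i, (w' i)^2) →
      s₁ ∈ basePolytope F₁ → s₂ ∈ basePolytope F₂ →
      (∀ s₁' ∈ basePolytope F₁, ∀ s₂' ∈ basePolytope F₂,
        (∑ i, (s₁ i + s₂ i - u i)^2) ≤ ∑ i, (s₁' i + s₂' i - u i)^2) →
      w = u - s₁ - s₂) ∧
    basePolytope (fun B : Finset (Fin n) => F₁ B + F₂ B)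
      = basePolytope F₁ + basePolytope F₂ := by
  
  classical
  set B : Set (Fin n → ℝ) := basePolytope F₁ + basePolytope F₂ with hB
  have hBne : B.Nonempty := ⟨greedy F₁ 1 + greedy F₂ 1,
    Set.add_mem_add (greedy_mem F₁ hF₁ hF₁0 1) (greedy_mem F₂ hF₂ hF₂0 1)⟩
  have hBconv : Convex ℝ B := (convex_basePolytope F₁).add (convex_basePolytope F₂)
  have hBcomp : IsCompact B := (isCompact_basePolytope F₁).add (isCompact_basePolytope F₂)
  obtain ⟨p, hpB, hpmin, hpvar⟩ := proj_spec hBne hBcomp hBconv u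
  set d2 := ∑ i, (p i - u i)^2 with hd2
  have Fa : ∀ (w s : Fin n → ℝ), s ∈ B →
      (∑ i, s i * w i) ≤ lovasz F₁ w + lovasz F₂ w := by
    intro w s hs
    obtain ⟨s₁, hs₁, s₂, hs₂, rfl⟩ := Set.mem_add.1 hs
    have h1 := inner_le_lovasz F₁ hF₁0 hs₁ w
    have h2 := inner_le_lovasz F₂ hF₂0 hs₂ w
    have hsplit : ∑ i, (s₁ + s₂) i * w i = (∑ i, s₁ i * w i) + ∑ i, s₂ i * w i := by
      rw [← Finset.sum_add_distrib]
      exact Finset.sum_congr rfl fun i _ => by simp only [Pi.add_apply]; ring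
    rw [hsplit]
    linarith
  have Fb : ∀ w : Fin n → ℝ, ∃ s ∈ B, (∑ i, s i * w i) = lovasz F₁ w + lovasz F₂ w := by
    intro w
    set σ := Tuple.sort fun i => -w i with hσ
    refine ⟨greedy F₁ σ + greedy F₂ σ,
      Set.add_mem_add (greedy_mem F₁ hF₁ hF₁0 σ) (greedy_mem F₂ hF₂ hF₂0 σ), ?_⟩
    rw [lovasz_eq_inner F₁ w, lovasz_eq_inner F₂ w, ← hσ, ← Finset.sum_add_distrib]
    exact Finset.sum_congr rfl fun i _ => by simp only [Pi.add_apply]; ring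
  have hLws : lovasz F₁ (u - p) + lovasz F₂ (u - p) = ∑ i, p i * (u - p) i := by
    refine le_antisymm ?_ (Fa (u - p) p hpB)
    obtain ⟨g, hgB, hg⟩ := Fb (u - p)
    rw [← hg]
    have hv := hpvar g hgB
    have hdiff : (∑ i, g i * (u - p) i) - (∑ i, p i * (u - p) i)
        = ∑ i, (u i - p i) * (g i - p i) := by
      rw [← Finset.sum_sub_distrib]
      exact Finset.sum_congr rfl fun i _ => by simp only [Pi.sub_apply]; ring
    linarith
  have hEbound : ∀ w : Fin n → ℝ, -(1/2)*d2
      ≤ lovasz F₁ w + lovasz F₂ w - (∑ i, u i * w i) + (1/2) * ∑ i, (w i)^2 := by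
    intro w
    have h1 := Fa w p hpB
    have h2 := sum_ident p u w
    have h3 : (0:ℝ) ≤ ∑ i, (w i - (u i - p i))^2 :=
      Finset.sum_nonneg fun i _ => sq_nonneg _
    rw [← hd2] at h2
    linarith
  have hEstar : lovasz F₁ (u - p) + lovasz F₂ (u - p) - (∑ i, u i * (u - p) i)
      + (1/2) * ∑ i, ((u - p) i)^2 = -(1/2)*d2 := by
    rw [hLws]
    have h2 := sum_ident p u (u - p)
    have h4 : ∑ i, ((u - p) i - (u i - p i))^2 = 0 := by
      apply Finset.sum_eq_zero
      intro i _
      simp [Pi.sub_apply]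
    rw [← hd2] at h2
    rw [h2, h4]
    ring
  have hInf : sInf {x : ℝ | ∃ w : Fin n → ℝ,
      x = lovasz F₁ w + lovasz F₂ w - (∑ i, u i * w i) + (1/2) * ∑ i, (w i)^2}
      = -(1/2)*d2 := by
    apply le_antisymm
    · exact csInf_le ⟨-(1/2)*d2, by rintro x ⟨w, rfl⟩; exact hEbound w⟩
        ⟨u - p, hEstar.symm⟩
    · have hne' : {x : ℝ | ∃ w : Fin n → ℝ,
          x = lovasz F₁ w + lovasz F₂ w - (∑ i, u i * w i)
            + (1/2) * ∑ i, (w i)^2}.Nonempty := ⟨_, u - p, rfl⟩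
      refine le_csInf hne' ?_
      rintro x ⟨w, rfl⟩
      exact hEbound w
  have hconvsum : ∀ s₁ s₂ : Fin n → ℝ,
      (∑ i, ((s₁ + s₂) i - u i)^2) = ∑ i, (s₁ i + s₂ i - u i)^2 := fun s₁ s₂ =>
    Finset.sum_congr rfl fun i _ => by simp only [Pi.add_apply]
  obtain ⟨p₁, hp₁, p₂, hp₂, hpe⟩ := Set.mem_add.1 hpB
  have hpd : ∑ i, (p₁ i + p₂ i - u i)^2 = d2 := by
    rw [← hconvsum p₁ p₂, hpe, ← hd2]
  have hub : ∀ x ∈ {x : ℝ | ∃ s₁ ∈ basePolytope F₁, ∃ s₂ ∈ basePolytope F₂,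
      x = -(1/2) * ∑ i, (s₁ i + s₂ i - u i)^2}, x ≤ -(1/2)*d2 := by
    rintro x ⟨s₁, hs₁, s₂, hs₂, rfl⟩
    have := hpmin (s₁ + s₂) (Set.add_mem_add hs₁ hs₂)
    rw [hconvsum] at this
    linarith
  have hSup : sSup {x : ℝ | ∃ s₁ ∈ basePolytope F₁, ∃ s₂ ∈ basePolytope F₂,
      x = -(1/2) * ∑ i, (s₁ i + s₂ i - u i)^2} = -(1/2)*d2 := by
    apply le_antisymm
    · exact csSup_le ⟨_, ⟨p₁, hp₁, p₂, hp₂, rfl⟩⟩ hub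
    · exact le_csSup ⟨-(1/2)*d2, hub⟩ ⟨p₁, hp₁, p₂, hp₂, by rw [hpd]⟩
  refine ⟨hInf.trans hSup.symm, ?_, basePolytope_add F₁ F₂ hF₁ hF₂ hF₁0 hF₂0⟩
  intro w s₁ s₂ hwmin hs₁ hs₂ hsmin
  have hsB : s₁ + s₂ ∈ B := Set.add_mem_add hs₁ hs₂
  have hsmin' : ∀ q ∈ B, (∑ i, ((s₁ + s₂) i - u i)^2) ≤ ∑ i, (q i - u i)^2 := by
    intro q hq
    obtain ⟨t₁, ht₁, t₂, ht₂, rfl⟩ := Set.mem_add.1 hq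
    rw [hconvsum, hconvsum]
    exact hsmin t₁ ht₁ t₂ ht₂
  have hps : p = s₁ + s₂ := proj_unique hBconv u hpB hsB hpmin hsmin'
  have hwle : lovasz F₁ w + lovasz F₂ w - (∑ i, u i * w i) + (1/2) * ∑ i, (w i)^2
      ≤ -(1/2)*d2 := by
    rw [← hEstar]
    exact hwmin (u - p)
  have h1 := Fa w p hpB
  have h2 := sum_ident p u w
  rw [← hd2] at h2
  have hsq : (∑ i, (w i - (u i - p i))^2) ≤ 0 := by linarith
  have hw : w = u - p := by
    funext i
    have hz : ∑ i, (w i - (u i - p i))^2 = 0 :=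
      le_antisymm hsq (Finset.sum_nonneg fun i _ => sq_nonneg _)
    have h5 := (Finset.sum_eq_zero_iff_of_nonneg
      (fun i _ => sq_nonneg (w i - (u i - p i)))).1 hz i (Finset.mem_univ i)
    have h6 := pow_eq_zero_iff (n := 2) (by norm_num) |>.1 h5
    have h7 := sub_eq_zero.1 h6
    simpa [Pi.sub_apply] using h7
  rw [hw, hps, sub_sub]
end
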